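/- arXiv:0906.1741 — 8 statements merged into one kernel-verified Lean document; each statement's English description precedes it below -/
import Mathlib

section
/- With notation as before, the corestriction map ν: F[G_{n-1}] → F[G_n] on the mod-p group algebras of cyclic p-groups is injective; equivalently, for θ ∈ O[G_{n-1}], μ(ν(θ)) = μ(θ), where μ(Σ c_σ σ) = min_σ ord_p(c_σ). -/
/-- The corestriction map `ν : R[ZMod a] → R[ZMod b]` (for `a ∣ b`) sending a group
element `σ` to the sum of its preimages under the natural surjection
`ZMod b → ZMod a`. -/
noncomputable def cores (R : Type*) [CommRing R] (a b : ℕ) [NeZero a] [NeZero b] (h : a ∣ b)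
    (θ : MonoidAlgebra R (Multiplicative (ZMod a))) :
    MonoidAlgebra R (Multiplicative (ZMod b)) :=
  MonoidAlgebra.ofCoeff (Finsupp.equivFunOnFinite.symm
    (fun τ => θ.coeff (Multiplicative.ofAdd (ZMod.castHom h (ZMod a) (Multiplicative.toAdd τ)))))

/-- The μ-invariant of `θ = Σ c_σ σ ∈ O[ZMod m]`: the minimum of `ord_p(c_σ)`
over all `σ`, where `ord_p` is a given additive valuation. -/
noncomputable def muInv (O : Type*) [CommRing O] (v : AddValuation O (WithTop ℚ))
    (m : ℕ) [NeZero m] (θ : MonoidAlgebra O (Multiplicative (ZMod m))) : WithTop ℚ :=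
  Finset.univ.inf' Finset.univ_nonempty (fun σ : Multiplicative (ZMod m) => v (θ.coeff σ))

/-!
The coefficient of `ν(θ)` at `τ ∈ G_n` is the coefficient of `θ` at the image of `τ` in
`G_{n-1}`, so `ν` is precomposition of coefficient functions with a surjection. Precomposition
with a surjection is injective and does not change the set of coefficient values, hence neither
their minimal valuation.
-/

open Function

theorem Finset.univ_inf'_comp_of_surjective {α β γ : Type*} [Fintype α] [Fintype β]
    [Nonempty α] [Nonempty β] [SemilatticeInf γ] {f : α → β} (hf : Surjective f) (g : β → γ) :
    univ.inf' univ_nonempty (g ∘ f) = univ.inf' univ_nonempty g := by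
  classical
  rw [inf'_comp_eq_image univ_nonempty]
  exact inf'_congr _ (image_univ_of_surjective hf) fun _ _ => rfl

def ZMod.castHomMultiplicative {a b : ℕ} (h : a ∣ b) :
    Multiplicative (ZMod b) → Multiplicative (ZMod a) :=
  fun τ => Multiplicative.ofAdd (ZMod.castHom h (ZMod a) τ.toAdd)

theorem ZMod.castHomMultiplicative_surjective {a b : ℕ} (h : a ∣ b) :
    Surjective (ZMod.castHomMultiplicative h) :=
  Multiplicative.ofAdd.surjective.comp
    ((ZMod.ringHom_surjective _).comp Multiplicative.toAdd.surjective)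

section Cores

variable (R : Type*) [CommRing R] {a b : ℕ} [NeZero a] [NeZero b] (h : a ∣ b)

theorem cores_coeff (θ : MonoidAlgebra R (Multiplicative (ZMod a))) :
    (cores R a b h θ).coeff = θ.coeff ∘ ZMod.castHomMultiplicative h :=
  rfl

theorem cores_injective : Injective (cores R a b h) := by
  intro θ₁ θ₂ hθ
  have hcoeff : θ₁.coeff ∘ ZMod.castHomMultiplicative h =
      θ₂.coeff ∘ ZMod.castHomMultiplicative h := by
    rw [← cores_coeff, ← cores_coeff, hθ]
  exact MonoidAlgebra.coeff_injective <| DFunLike.coe_injective <|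
    (ZMod.castHomMultiplicative_surjective h).injective_comp_right hcoeff

theorem muInv_cores (v : AddValuation R (WithTop ℚ))
    (θ : MonoidAlgebra R (Multiplicative (ZMod a))) :
    muInv R v b (cores R a b h θ) = muInv R v a θ :=
  Finset.univ_inf'_comp_of_surjective (ZMod.castHomMultiplicative_surjective h) (v ∘ θ.coeff)

end Cores

theorem cores_injective_and_mu_cores_general (p : ℕ) [NeZero p]
    (n : ℕ)
    (F : Type*) [Field F]
    (O : Type*) [CommRing O]
    (v : AddValuation O (WithTop ℚ)) :
    Function.Injective
        (cores F (p ^ (n - 1)) (p ^ n) (pow_dvd_pow p (Nat.sub_le n 1))) ∧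
      ∀ θ : MonoidAlgebra O (Multiplicative (ZMod (p ^ (n - 1)))),
        muInv O v (p ^ n) (cores O (p ^ (n - 1)) (p ^ n) (pow_dvd_pow p (Nat.sub_le n 1)) θ)
          = muInv O v (p ^ (n - 1)) θ :=
  ⟨cores_injective F _, muInv_cores O _ v⟩

/-- The corestriction map `ν : F[G_{n-1}] → F[G_n]` on mod-`p` group algebras of
cyclic `p`-groups is injective; equivalently, for `θ ∈ O[G_{n-1}]`
(with `O` the ring of integers of a finite extension of `Q_p`, `ord_p`
normalized so `ord_p(p) = 1`), one has `μ(ν(θ)) = μ(θ)`. -/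
theorem cores_injective_and_mu_cores (p : ℕ) (hp : p.Prime) (hodd : Odd p) [NeZero p]
    (n : ℕ) (hn : 1 ≤ n)
    (F : Type*) [Field F] [Fintype F] [CharP F p]
    (O : Type*) [CommRing O] [IsDomain O]
    (v : AddValuation O (WithTop ℚ)) (hvp : v (p : O) = 1) (hnn : ∀ x : O, 0 ≤ v x) :
    Function.Injective
        (cores F (p ^ (n - 1)) (p ^ n) (pow_dvd_pow p (Nat.sub_le n 1))) ∧
      ∀ θ : MonoidAlgebra O (Multiplicative (ZMod (p ^ (n - 1)))),
        muInv O v (p ^ n) (cores O (p ^ (n - 1)) (p ^ n) (pow_dvd_pow p (Nat.sub_le n 1)) θ)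
          = muInv O v (p ^ (n - 1)) θ :=
  cores_injective_and_mu_cores_general p n F O v
end

section
/- Let L = Σ_{j≥0} a_j T^j be a nonzero element of Λ = O[[T]] with Iwasawa invariants μ(L) = min_j ord_p(a_j) and λ(L) = min{j : ord_p(a_j) = μ(L)}. If L_n denotes the image of L in O[G_n] = O[[T]]/((1+T)^{p^n} - 1), then for all sufficiently large n, μ(L_n) = μ(L) and λ(L_n) = λ(L). -/
/-!
Since `p` divides every binomial coefficient `(p ^ n).choose k` with `0 < k < p ^ n`, we have
`(1 + T) ^ p ^ n - 1 = T ^ p ^ n + p * g`. Writing `L - Q = R * ((1 + T) ^ p ^ n - 1)` and comparing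
coefficients, `R` is the shift of `L - p * R * g` by `p ^ n`; bootstrapping one unit of valuation at a
time shows that all coefficients of `R` have valuation at least `μ(L)`. Hence the coefficients of `Q`
below `p ^ n` differ from those of `L` by terms of valuation at least `μ(L) + 1`, so `Q` has the same
minimal valuation as `L` and attains it at the same first index once `p ^ n > λ(L)`.
-/

open PowerSeries

theorem Nat.sInf_setOf_lt_and {P : ℕ → Prop} {m : ℕ} (hP : ∃ j, P j)
    (hm : sInf {j | P j} < m) : sInf {j | j < m ∧ P j} = sInf {j | P j} := by
  have hmem : sInf {j | P j} ∈ {j | j < m ∧ P j} := ⟨hm, Nat.sInf_mem hP⟩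
  exact le_antisymm (Nat.sInf_le hmem) (Nat.sInf_le (Nat.sInf_mem ⟨_, hmem⟩).2)

namespace AddValuation

variable {R Γ₀ : Type*} [Ring R] [LinearOrderedAddCommMonoidWithTop Γ₀] (v : AddValuation R Γ₀)

theorem map_sub_eq_iff_of_lt {x y : R} {g : Γ₀} (hy : g < v y) : v (x - y) = g ↔ v x = g := by
  constructor
  · intro h
    rw [← sub_add_cancel x y, map_add_eq_of_lt_left v (h ▸ hy), h]
  · intro h
    rw [map_sub_eq_of_lt_left v (h ▸ hy), h]

theorem le_map_coeff_mul {f g : R⟦X⟧} {a b : Γ₀} (hf : ∀ k, a ≤ v (coeff k f))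
    (hg : ∀ k, b ≤ v (coeff k g)) (j : ℕ) : a + b ≤ v (coeff j (f * g)) := by
  rw [coeff_mul]
  exact v.map_le_sum fun i _ => (v.map_mul _ _).symm ▸ add_le_add (hf _) (hg _)

end AddValuation

namespace PowerSeries

variable {O : Type*} [CommRing O]

theorem exists_one_add_X_pow_prime_pow_sub_one {p : ℕ} (hp : p.Prime) (n : ℕ) :
    ∃ g : O⟦X⟧, (1 + X) ^ p ^ n - 1 = X ^ p ^ n + C (p : O) * g := by
  refine ⟨mk fun k => (((p ^ n).choose k / p : ℕ) : O), ?_⟩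
  ext k
  have hbinom : coeff k ((1 + X : O⟦X⟧) ^ p ^ n) = ((p ^ n).choose k : O) := by
    rw [← Polynomial.coe_X, ← Polynomial.coe_one, ← Polynomial.coe_add, ← Polynomial.coe_pow,
      Polynomial.coeff_coe, Polynomial.coeff_one_add_X_pow]
  rw [map_sub, map_add, hbinom, coeff_X_pow, coeff_C_mul, coeff_mk, coeff_one]
  rcases eq_or_ne k 0 with rfl | hk0
  · simp [Nat.div_eq_of_lt hp.one_lt, (pow_pos hp.pos n).ne]
  rcases eq_or_ne k (p ^ n) with rfl | hkp
  · simp [hp.ne_zero, Nat.div_eq_of_lt hp.one_lt]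
  rw [← Nat.cast_mul, Nat.mul_div_cancel' (hp.dvd_choose_pow hk0 hkp)]
  simp [hk0, hkp]

theorem coeff_sub_coeff_mul_eq {L R h : O⟦X⟧} {Q : Polynomial O} {m : ℕ} (hQ : Q.degree < m)
    (hLQ : R * (X ^ m + h) = L - (Q : O⟦X⟧)) (j : ℕ) :
    coeff j L - coeff j (R * h) = if j < m then Q.coeff j else coeff (j - m) R := by
  have hL : L - R * h = (Q : O⟦X⟧) + R * X ^ m := by linear_combination -hLQ
  rw [← map_sub, hL, map_add, Polynomial.coeff_coe, coeff_mul_X_pow']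
  split_ifs with hmj hjm hjm
  · omega
  · rw [Polynomial.coeff_eq_zero_of_degree_lt (hQ.trans_le (by exact_mod_cast hmj)), zero_add]
  · rw [add_zero]
  · omega

variable {v : AddValuation O (WithTop ℚ)}

theorem le_map_coeff_of_coeff_eq_sub (hnn : ∀ x, 0 ≤ v x) {L R h : O⟦X⟧} {m : ℕ}
    {μ : WithTop ℚ} (hμ : μ ≠ ⊤) (hL : ∀ j, μ ≤ v (coeff j L)) (hh : ∀ j, 1 ≤ v (coeff j h))
    (hR : ∀ k, coeff k R = coeff (k + m) L - coeff (k + m) (R * h)) (k : ℕ) :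
    μ ≤ v (coeff k R) := by
  have hbound : ∀ s : ℕ, ∀ k, min μ s ≤ v (coeff k R) := by
    intro s
    induction s with
    | zero => exact fun k => (min_le_right _ _).trans (by simpa using hnn _)
    | succ s ih =>
      intro k
      rw [hR k]
      refine v.map_le_sub ((min_le_left _ _).trans (hL _)) ?_
      calc min μ ((s + 1 : ℕ) : WithTop ℚ) ≤ min μ s + 1 := by
            rw [← min_add_add_right, Nat.cast_succ]
            exact min_le_min (le_add_of_nonneg_right zero_le_one) le_rfl
        _ ≤ v (coeff (k + m) (R * h)) := v.le_map_coeff_mul ih hh _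
  obtain ⟨q, rfl⟩ := WithTop.ne_top_iff_exists.mp hμ
  obtain ⟨s, hs⟩ := exists_nat_ge q
  simpa [min_eq_left (show (q : WithTop ℚ) ≤ s by exact_mod_cast hs)] using hbound s k

theorem exists_coeff_eq_sub_of_mem_span {p : ℕ} (hp : p.Prime) (hvp : v (p : O) = 1)
    (hnn : ∀ x, 0 ≤ v x) {L : O⟦X⟧} {μ : WithTop ℚ} (hμ : μ ≠ ⊤) (hL : ∀ j, μ ≤ v (coeff j L))
    {n : ℕ} {Q : Polynomial O} (hQ : Q.degree < (p ^ n : ℕ))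
    (hLQ : L - (Q : O⟦X⟧) ∈ Ideal.span {(1 + X) ^ p ^ n - 1}) :
    ∃ e : ℕ → O, (∀ j, 1 + μ ≤ v (e j)) ∧ ∀ j < p ^ n, Q.coeff j = coeff j L - e j := by
  obtain ⟨g, hg⟩ := exists_one_add_X_pow_prime_pow_sub_one (O := O) hp n
  obtain ⟨R, hR⟩ := Ideal.mem_span_singleton'.mp hLQ
  rw [hg] at hR
  have hsplit := coeff_sub_coeff_mul_eq hQ hR
  have hpg : ∀ j, 1 ≤ v (coeff j (C (p : O) * g)) := fun j => by
    rw [coeff_C_mul, v.map_mul, hvp]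
    exact le_add_of_nonneg_right (hnn _)
  have hRμ : ∀ k, μ ≤ v (coeff k R) :=
    le_map_coeff_of_coeff_eq_sub (m := p ^ n) hnn hμ hL hpg fun k => by
      rw [hsplit, if_neg (by omega), Nat.add_sub_cancel]
  refine ⟨fun j => coeff j (R * (C (p : O) * g)), fun j => ?_, fun j hj => ?_⟩
  · rw [add_comm]
    exact v.le_map_coeff_mul hRμ hpg j
  · rw [hsplit, if_pos hj]

end PowerSeries

theorem iwasawa_invariants_finite_level_general (p : ℕ) (hp : p.Prime)
    (O : Type*) [CommRing O]
    (v : AddValuation O (WithTop ℚ)) (hvp : v (p : O) = 1)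
    (hnn : ∀ x : O, 0 ≤ v x) (hvtop : ∀ x : O, v x = ⊤ ↔ x = 0)
    (L : PowerSeries O) (hL : L ≠ 0)
    (μL : WithTop ℚ)
    (hμL : IsLeast {x | ∃ j : ℕ, x = v (PowerSeries.coeff j L)} μL) :
    ∃ N : ℕ, ∀ n ≥ N, ∀ Q : Polynomial O, Q.degree < (p ^ n : ℕ) →
      (L - (Q : PowerSeries O)) ∈
        Ideal.span ({(1 + PowerSeries.X) ^ (p ^ n) - 1} : Set (PowerSeries O)) →
      ((Finset.range (p ^ n)).inf' (Finset.nonempty_range_iff.mpr (pow_ne_zero n hp.ne_zero)) (fun j => v (Q.coeff j)) = μL ∧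
        sInf {j | j < p ^ n ∧ v (Q.coeff j) = μL}
          = sInf {j : ℕ | v (PowerSeries.coeff j L) = μL}) := by
  have hlb : ∀ j, μL ≤ v (coeff j L) := fun j => hμL.2 ⟨j, rfl⟩
  obtain ⟨j₁, hj₁⟩ := exists_coeff_ne_zero_iff_ne_zero.mpr hL
  have hμ : μL ≠ ⊤ := ne_top_of_le_ne_top ((hvtop _).not.mpr hj₁) (hlb j₁)
  have hμlt : μL < 1 + μL := by
    obtain ⟨q, rfl⟩ := WithTop.ne_top_iff_exists.mp hμ
    exact_mod_cast lt_one_add q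
  obtain ⟨j₀, hj₀⟩ := hμL.1
  have hlam : ∃ j, v (coeff j L) = μL := ⟨j₀, hj₀.symm⟩
  refine ⟨sInf {j | v (coeff j L) = μL} + 1, fun n hn Q hQ hLQ => ?_⟩
  have hlam_lt : sInf {j | v (coeff j L) = μL} < p ^ n :=
    (Nat.lt_pow_self hp.one_lt).trans (Nat.pow_lt_pow_right hp.one_lt hn)
  obtain ⟨e, he, hQe⟩ := exists_coeff_eq_sub_of_mem_span hp hvp hnn hμ hlb hQ hLQ
  have hQ_iff : ∀ j < p ^ n, v (Q.coeff j) = μL ↔ v (coeff j L) = μL := fun j hj =>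
    hQe j hj ▸ v.map_sub_eq_iff_of_lt (hμlt.trans_le (he j))
  have hQ_ge : ∀ j < p ^ n, μL ≤ v (Q.coeff j) := fun j hj =>
    hQe j hj ▸ v.map_le_sub (hlb j) (hμlt.le.trans (he j))
  constructor
  · refine le_antisymm ?_ (Finset.le_inf' _ _ fun j hj => hQ_ge j (Finset.mem_range.mp hj))
    exact Finset.inf'_le_of_le _ (Finset.mem_range.mpr hlam_lt) ((hQ_iff _ hlam_lt).mpr (Nat.sInf_mem hlam)).le
  · rw [← Nat.sInf_setOf_lt_and hlam hlam_lt]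
    exact congrArg sInf (Set.ext fun j => and_congr_right (hQ_iff j))

/-- Let `O` be the ring of integers of a finite extension of `Q_p`, with valuation
`v = ord_p` (normalized so that `ord_p(p) = 1` and `v(x) = ∞ ↔ x = 0`).
Let `L = Σ a_j T^j` be a nonzero element of `Λ = O[[T]]`, with Iwasawa invariants
`μ(L) = min_j ord_p(a_j)` and `λ(L) = min { j : ord_p(a_j) = μ(L) }`.
If `L_n` denotes the image of `L` in `O[G_n] = O[[T]]/((1+T)^{p^n} - 1)`
(represented by the polynomial `Q` of degree `< p^n` congruent to `L` modulo
`(1+T)^{p^n} - 1`, with `μ(L_n)` the minimum valuation of its coefficients and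
`λ(L_n)` the least index achieving it), then for all sufficiently large `n`,
`μ(L_n) = μ(L)` and `λ(L_n) = λ(L)`. -/
theorem iwasawa_invariants_finite_level (p : ℕ) (hp : p.Prime) (hodd : Odd p)
    (O : Type*) [CommRing O] [IsDomain O]
    (v : AddValuation O (WithTop ℚ)) (hvp : v (p : O) = 1)
    (hnn : ∀ x : O, 0 ≤ v x) (hvtop : ∀ x : O, v x = ⊤ ↔ x = 0)
    (L : PowerSeries O) (hL : L ≠ 0)
    (μL : WithTop ℚ)
    (hμL : IsLeast {x | ∃ j : ℕ, x = v (PowerSeries.coeff j L)} μL) :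
    ∃ N : ℕ, ∀ n ≥ N, ∀ Q : Polynomial O, Q.degree < (p ^ n : ℕ) →
      (L - (Q : PowerSeries O)) ∈
        Ideal.span ({(1 + PowerSeries.X) ^ (p ^ n) - 1} : Set (PowerSeries O)) →
      ((Finset.range (p ^ n)).inf' (Finset.nonempty_range_iff.mpr (pow_ne_zero n hp.ne_zero)) (fun j => v (Q.coeff j)) = μL ∧
        sInf {j | j < p ^ n ∧ v (Q.coeff j) = μL}
          = sInf {j : ℕ | v (PowerSeries.coeff j L) = μL}) :=
  iwasawa_invariants_finite_level_general p hp O v hvp hnn hvtop L hL μL hμL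
end

section
/- Every ideal of the group algebra F[G] of a cyclic p-group G over a field F of characteristic p is a power of the augmentation ideal I; in particular the ideals of F[G] are totally ordered: F[G] = I^0 ⊋ I ⊋ I^2 ⊋ ⋯ ⊋ I^{|G|} = 0. -/
/-!
Let `g` generate `G` and put `t = g - 1`. Since `g ^ k - 1` is divisible by `g - 1`, the
augmentation ideal is `(t)`; in characteristic `p` we get `t ^ p ^ n = g ^ p ^ n - 1 = 0`, while
`t ^ j ≠ 0` for `j < p ^ n` because its coefficient at `1` is `± 1`. An element outside `(t)` is a
nonzero scalar plus a nilpotent, hence a unit. In a commutative ring with this property every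
ideal `J` is `(t ^ j)` for the largest `j` with `J ≤ (t ^ j)`: an element of `J` outside
`(t ^ (j + 1))` is `t ^ j` times a unit.
-/

/-- The augmentation ideal of `F[G]`. -/
noncomputable def augIdeal (F : Type*) [CommRing F] (G : Type*) [CommGroup G] :
    Ideal (MonoidAlgebra F G) :=
  Ideal.span {x | ∃ g : G, x = MonoidAlgebra.single g 1 - 1}

namespace Ideal

variable {R : Type*} [CommRing R] {t : R}

theorem span_singleton_pow_succ_lt (ht : IsNilpotent t) {j : ℕ} (hj : t ^ j ≠ 0) :
    span {t ^ (j + 1)} < span {t ^ j} := by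
  refine lt_of_le_of_ne (span_singleton_le_span_singleton.mpr (pow_dvd_pow t j.le_succ)) ?_
  intro h
  obtain ⟨c, hc⟩ := span_singleton_le_span_singleton.mp h.ge
  have hunit : IsUnit (1 - t * c) := (Commute.all t c).isNilpotent_mul_right ht |>.isUnit_one_sub
  exact hj (hunit.mul_left_eq_zero.mp (by linear_combination hc))

theorem span_singleton_eq_span_pow_of_mem_of_notMem (hunit : ∀ x ∉ span {t}, IsUnit x)
    {j : ℕ} {x : R}
    (hx : x ∈ span {t ^ j}) (hx' : x ∉ span {t ^ (j + 1)}) : span {x} = span {t ^ j} := by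
  obtain ⟨c, rfl⟩ := mem_span_singleton.mp hx
  have hc : c ∉ span {t} := fun hc ↦ hx' <| by
    obtain ⟨d, rfl⟩ := mem_span_singleton.mp hc
    exact mem_span_singleton.mpr ⟨d, by ring⟩
  exact span_singleton_mul_right_unit (hunit c hc) _

theorem exists_eq_span_singleton_pow (hunit : ∀ x ∉ span {t}, IsUnit x) {q : ℕ}
    (ht : t ^ q = 0) (J : Ideal R) :
    ∃ j ≤ q, J = span {t ^ j} := by
  classical
  let P : ℕ → Prop := fun j ↦ J ≤ span {t ^ j}
  set j := Nat.findGreatest P q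
  have hJ : J ≤ span {t ^ j} := Nat.findGreatest_spec (P := P) q.zero_le (by simp [P])
  have hjq : j ≤ q := Nat.findGreatest_le q
  refine ⟨j, hjq, ?_⟩
  rcases hjq.lt_or_eq with hjq | hjq
  · obtain ⟨x, hxJ, hx⟩ := SetLike.not_le_iff_exists.mp
      (Nat.findGreatest_is_greatest (P := P) j.lt_succ_self hjq)
    refine hJ.antisymm ?_
    rw [← span_singleton_eq_span_pow_of_mem_of_notMem hunit (hJ hxJ) hx]
    exact span_singleton_le_iff_mem _ |>.mpr hxJ
  · rw [hjq, ht, span_singleton_eq_bot.mpr rfl] at hJ ⊢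
    exact le_bot_iff.mp hJ

end Ideal

namespace MonoidAlgebra

section CommRing

variable {F G : Type*} [CommRing F] [CommGroup G]

theorem single_sub_one_mem_span_single_sub_one {g h : G} (hh : h ∈ Submonoid.powers g) :
    single h (1 : F) - 1 ∈ Ideal.span {single g 1 - 1} := by
  obtain ⟨k, rfl⟩ := hh
  simpa [single_pow] using
    Ideal.mem_span_singleton.mpr (sub_dvd_pow_sub_pow (single g (1 : F)) 1 k)

theorem augIdeal_eq_span_single_sub_one {g : G} (hg : ∀ h, h ∈ Submonoid.powers g) :
    augIdeal F G = Ideal.span {single g 1 - 1} := by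
  refine le_antisymm (Ideal.span_le.mpr ?_) (Ideal.span_le.mpr ?_)
  · rintro _ ⟨h, rfl⟩
    exact single_sub_one_mem_span_single_sub_one (hg h)
  · rintro _ rfl
    exact Ideal.subset_span ⟨g, rfl⟩

theorem exists_sub_algebraMap_mem_augIdeal (x : MonoidAlgebra F G) :
    ∃ a : F, x - algebraMap F _ a ∈ augIdeal F G := by
  induction x using MonoidAlgebra.induction_linear with
  | zero => exact ⟨0, by simp⟩
  | add x y hx hy =>
    obtain ⟨a, ha⟩ := hx
    obtain ⟨b, hb⟩ := hy
    exact ⟨a + b, by simpa [map_add, add_sub_add_comm] using Ideal.add_mem _ ha hb⟩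
  | single g a =>
    refine ⟨a, ?_⟩
    have : single g a - algebraMap F _ a = algebraMap F _ a * (single g 1 - 1) := by
      rw [mul_sub, mul_one, coe_algebraMap, Function.comp_apply, single_mul_single, one_mul,
        mul_one, Algebra.algebraMap_self, RingHom.id_apply]
    rw [this]
    exact Ideal.mul_mem_left _ _ (Ideal.subset_span ⟨g, rfl⟩)

theorem single_sub_one_pow_eq_zero {p : ℕ} [ExpChar F p] {g : G} {n : ℕ} (hg : g ^ p ^ n = 1) :
    (single g (1 : F) - 1) ^ p ^ n = 0 := by
  have : ExpChar (MonoidAlgebra F G) p := expChar_of_injective_algebraMap single_right_injective p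
  rw [sub_pow_expChar_pow, single_pow, hg, one_pow, one_pow, one_def, sub_self]

theorem coeff_one_single_sub_one_pow {g : G} {k : ℕ} (hk : k < orderOf g) :
    ((single g (1 : F) - 1) ^ k).coeff 1 = (-1) ^ k := by
  classical
  have hexp : (single g (1 : F) - 1) ^ k =
      ∑ m ∈ Finset.range (k + 1), single (g ^ m) ((-1) ^ (m + k) * (k.choose m : F)) := by
    rw [sub_pow]
    refine Finset.sum_congr rfl fun m _ ↦ ?_
    rw [one_def, ← single_neg, natCast_def, single_pow, single_pow, single_pow]
    simp [single_mul_single, mul_comm]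
  rw [hexp, coeff_sum, Finsupp.finsetSum_apply, Finset.sum_eq_single_of_mem 0 (by simp)]
  · simp
  · intro m hm hm0
    have hgm : g ^ m ≠ 1 := pow_ne_one_of_lt_orderOf hm0 (by simp at hm; omega)
    simp [hgm]

theorem single_sub_one_pow_ne_zero [Nontrivial F] {g : G} {k : ℕ} (hk : k < orderOf g) :
    (single g (1 : F) - 1) ^ k ≠ 0 := by
  intro h
  have hcoeff := coeff_one_single_sub_one_pow (F := F) hk
  rw [h, coeff_zero, Finsupp.coe_zero, Pi.zero_apply] at hcoeff
  exact (isUnit_one.neg.pow k).ne_zero hcoeff.symm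

end CommRing

section Field

variable {F G : Type*} [Field F] [CommGroup G]

theorem isUnit_of_notMem_augIdeal (hnil : augIdeal F G ≤ nilradical _)
    {x : MonoidAlgebra F G} (hx : x ∉ augIdeal F G) : IsUnit x := by
  obtain ⟨a, ha⟩ := exists_sub_algebraMap_mem_augIdeal x
  have ha0 : a ≠ 0 := by rintro rfl; simp_all
  simpa using (mem_nilradical.mp (hnil ha)).isUnit_add_left_of_commute
    ((Ne.isUnit ha0).map (algebraMap F _)) (.all _ _)

end Field

end MonoidAlgebra

theorem Multiplicative.mem_powers_ofAdd_one {q : ℕ} [NeZero q] (h : Multiplicative (ZMod q)) :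
    h ∈ Submonoid.powers (ofAdd 1) :=
  ⟨(toAdd h).val, by dsimp only; rw [← ofAdd_nsmul, nsmul_one, ZMod.natCast_zmod_val, ofAdd_toAdd]⟩

theorem Multiplicative.orderOf_ofAdd_one (q : ℕ) : orderOf (ofAdd (1 : ZMod q)) = q := by
  rw [orderOf_ofAdd_eq_addOrderOf, ZMod.addOrderOf_one]

theorem ideals_powers_of_augmentation_general (p n : ℕ) [NeZero p]
    (F : Type*) [Field F] [CharP F p] :
    (∀ J : Ideal (MonoidAlgebra F (Multiplicative (ZMod (p ^ n)))),
        ∃ j ≤ p ^ n, J = (augIdeal F (Multiplicative (ZMod (p ^ n)))) ^ j) ∧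
      (∀ j < p ^ n,
        (augIdeal F (Multiplicative (ZMod (p ^ n)))) ^ (j + 1)
          < (augIdeal F (Multiplicative (ZMod (p ^ n)))) ^ j) ∧
      (augIdeal F (Multiplicative (ZMod (p ^ n)))) ^ (p ^ n) = ⊥ := by
  have := CharP.char_is_prime_of_pos F p
  set t := MonoidAlgebra.single (Multiplicative.ofAdd (1 : ZMod (p ^ n))) (1 : F) - 1
  have hord : orderOf (Multiplicative.ofAdd (1 : ZMod (p ^ n))) = p ^ n :=
    Multiplicative.orderOf_ofAdd_one _
  have hI : augIdeal F _ = Ideal.span {t} :=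
    MonoidAlgebra.augIdeal_eq_span_single_sub_one Multiplicative.mem_powers_ofAdd_one
  have ht : t ^ p ^ n = 0 := MonoidAlgebra.single_sub_one_pow_eq_zero <|
    by simpa only [hord] using pow_orderOf_eq_one (Multiplicative.ofAdd (1 : ZMod (p ^ n)))
  have hunit (x) (hx : x ∉ Ideal.span {t}) : IsUnit x := by
    refine MonoidAlgebra.isUnit_of_notMem_augIdeal ?_ (hI ▸ hx)
    rw [hI, Ideal.span_singleton_le_iff_mem, mem_nilradical]
    exact ⟨_, ht⟩
  simp only [hI, Ideal.span_singleton_pow]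
  refine ⟨Ideal.exists_eq_span_singleton_pow hunit ht, fun j hj ↦ ?_, by simp [ht]⟩
  exact Ideal.span_singleton_pow_succ_lt ⟨_, ht⟩
    (MonoidAlgebra.single_sub_one_pow_ne_zero (hj.trans_eq hord.symm))

/-- For `F` a field of characteristic `p` and `G` cyclic of order `p^n`, every
ideal of the group algebra `F[G]` is a power of the augmentation ideal `I`;
in particular the ideals of `F[G]` are totally ordered:
`F[G] = I^0 ⊋ I ⊋ I^2 ⊋ ⋯ ⊋ I^{p^n} = 0`. -/
theorem ideals_powers_of_augmentation (p n : ℕ) (hp : p.Prime) [NeZero p]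
    (F : Type*) [Field F] [CharP F p] :
    (∀ J : Ideal (MonoidAlgebra F (Multiplicative (ZMod (p ^ n)))),
        ∃ j ≤ p ^ n, J = (augIdeal F (Multiplicative (ZMod (p ^ n)))) ^ j) ∧
      (∀ j < p ^ n,
        (augIdeal F (Multiplicative (ZMod (p ^ n)))) ^ (j + 1)
          < (augIdeal F (Multiplicative (ZMod (p ^ n)))) ^ j) ∧
      (augIdeal F (Multiplicative (ZMod (p ^ n)))) ^ (p ^ n) = ⊥ :=
  ideals_powers_of_augmentation_general p n F
end

section
/- Define Fil^r(V_g(O)) = { Σ_{j=0}^g b_j X^j Y^{g-j} ∈ V_g(O) : p^{r-j} | b_j for 0 ≤ j ≤ r-1 }. Then Fil^r(V_g(O)) is stable under the right action of the semigroup S_0(p). -/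
open MvPolynomial

/-- The right action of an integral 2×2 matrix `γ = [[a,b],[c,d]]` on polynomials in
`X = X 0`, `Y = X 1`: `(P|γ)(X,Y) = P(dX - cY, -bX + aY)`. -/
noncomputable def matAct {R : Type*} [CommRing R] (γ : Matrix (Fin 2) (Fin 2) ℤ)
    (P : MvPolynomial (Fin 2) R) : MvPolynomial (Fin 2) R :=
  MvPolynomial.aeval
    ![γ 1 1 • MvPolynomial.X 0 - γ 1 0 • MvPolynomial.X 1,
      -(γ 0 1 • MvPolynomial.X 0) + γ 0 0 • MvPolynomial.X 1] P

/-- The semigroup `S_0(p)`. -/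
def memS0 (p : ℕ) (γ : Matrix (Fin 2) (Fin 2) ℤ) : Prop :=
  γ.det ≠ 0 ∧ (p : ℤ) ∣ γ 1 0 ∧ ¬ (p : ℤ) ∣ γ 0 0

/-- Membership in `Fil^r(V_g(O)) = { Σ b_j X^j Y^{g-j} : p^{r-j} ∣ b_j for 0 ≤ j ≤ r-1 }`:
the coefficient `b_j` of `X^j Y^{g-j}` is divisible by `p^{r-j}` for `j < r`. -/
def inFil (O : Type*) [CommRing O] (p g r : ℕ) (P : MvPolynomial (Fin 2) O) : Prop :=
  ∀ j < r, (p : O) ^ (r - j) ∣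
    MvPolynomial.coeff (Finsupp.single (0 : Fin 2) j + Finsupp.single (1 : Fin 2) (g - j)) P

/-- Coefficient of a monomial with too-small exponent at `s` in `X s ^ i * Q` vanishes. -/
lemma coeff_X_pow_mul_eq_zero {σ R : Type*} [CommSemiring R] [DecidableEq σ] (s : σ) :
    ∀ (i : ℕ) (Q : MvPolynomial σ R) (m : σ →₀ ℕ), m s < i → coeff m (X s ^ i * Q) = 0 := by
  intro i
  induction i with
  | zero => intro Q m h; omega
  | succ n ih =>
    intro Q m h
    rw [pow_succ', mul_assoc, coeff_X_mul']
    by_cases hs : s ∈ m.support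
    · rw [if_pos hs]
      apply ih
      rw [Finsupp.tsub_apply, Finsupp.single_apply, if_pos rfl]
      have : m s ≠ 0 := Finsupp.mem_support_iff.mp hs
      omega
    · rw [if_neg hs]

/-- Key divisibility: the coefficient of a monomial `m` in `(C u₀ * X 0 + C π * w) ^ j * Q`
is divisible by `π ^ (j - m 0)`. -/
lemma keyDvd {O : Type*} [CommRing O] (u0 π : O) (w Q : MvPolynomial (Fin 2) O)
    (j : ℕ) (m : Fin 2 →₀ ℕ) :
    π ^ (j - m 0) ∣ coeff m ((C u0 * X 0 + C π * w) ^ j * Q) := by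
  rw [add_pow, Finset.sum_mul, coeff_sum]
  apply Finset.dvd_sum
  intro i hi
  have key : (C u0 * X 0) ^ i * (C π * w) ^ (j - i) * ((j.choose i : ℕ) : MvPolynomial (Fin 2) O) * Q
      = C (u0 ^ i * π ^ (j - i)) *
        (X 0 ^ i * (w ^ (j - i) * (((j.choose i : ℕ) : MvPolynomial (Fin 2) O) * Q))) := by
    rw [map_mul, map_pow, map_pow]; ring
  rw [key, coeff_C_mul]
  by_cases hik : i ≤ m 0
  · have h1 : π ^ (j - m 0) ∣ π ^ (j - i) := pow_dvd_pow _ (by omega)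
    exact (h1.mul_left _).mul_right _
  · rw [coeff_X_pow_mul_eq_zero 0 i _ m (by omega), mul_zero]
    exact dvd_zero _


/-- `Fil^r(V_g(O))` is stable under the right action of the semigroup `S_0(p)`:
if `P ∈ V_g(O)` (homogeneous of degree `g`) lies in `Fil^r` and `γ ∈ S_0(p)`,
then `P|γ` again lies in `V_g(O)` and in `Fil^r`. -/
theorem fil_stable (p g r : ℕ) (hp : p.Prime)
    (O : Type*) [CommRing O]
    (γ : Matrix (Fin 2) (Fin 2) ℤ) (hγ : memS0 p γ)
    (P : MvPolynomial (Fin 2) O) (hP : P.IsHomogeneous g) (hfil : inFil O p g r P) :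
    (matAct γ P).IsHomogeneous g ∧ inFil O p g r (matAct γ P) := by
  obtain ⟨-, ⟨c', hc'⟩, -⟩ := hγ
  have hsm : ∀ (z : ℤ) (i : Fin 2),
      z • (X i : MvPolynomial (Fin 2) O) = C ((z : ℤ) : O) * X i := by
    intro z i
    rw [zsmul_eq_mul, ← map_intCast (C : O →+* MvPolynomial (Fin 2) O)]
  have h0 : (γ 1 1 • MvPolynomial.X 0 - γ 1 0 • MvPolynomial.X 1 :
      MvPolynomial (Fin 2) O).IsHomogeneous 1 := by
    rw [hsm, hsm]
    exact (isHomogeneous_C_mul_X _ 0).sub (isHomogeneous_C_mul_X _ 1)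
  have h1 : (-(γ 0 1 • MvPolynomial.X 0) + γ 0 0 • MvPolynomial.X 1 :
      MvPolynomial (Fin 2) O).IsHomogeneous 1 := by
    rw [hsm, hsm]
    exact ((isHomogeneous_C_mul_X _ 0).neg).add (isHomogeneous_C_mul_X _ 1)
  have hv : ∀ i : Fin 2,
      ((![γ 1 1 • MvPolynomial.X 0 - γ 1 0 • MvPolynomial.X 1,
      -(γ 0 1 • MvPolynomial.X 0) + γ 0 0 • MvPolynomial.X 1] :
        Fin 2 → MvPolynomial (Fin 2) O) i).IsHomogeneous 1 := by
    intro i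
    fin_cases i
    · exact h0
    · exact h1
  constructor
  · have := hP.aeval _ hv
    rw [one_mul] at this
    exact this
  · -- the filtration condition
    intro k hk
    -- each monomial in the support of P has exponents (j, g - j)
    have hdeg : ∀ m ∈ P.support, m 0 + m 1 = g := by
      intro m hm
      have := hP (Finsupp.mem_support_iff.mp hm)
      rw [Finsupp.weight_apply, Finsupp.sum_fintype] at this
      · simpa [Fin.sum_univ_two] using this
      · intro; simp
    rw [matAct, aeval_def, eval₂_eq', coeff_sum]
    apply Finset.dvd_sum
    intro m hm
    have hmg := hdeg m hm
    set j := m 0 with hj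
    have hprod : (∏ i : Fin 2,
        (![γ 1 1 • MvPolynomial.X 0 - γ 1 0 • MvPolynomial.X 1,
      -(γ 0 1 • MvPolynomial.X 0) + γ 0 0 • MvPolynomial.X 1] :
        Fin 2 → MvPolynomial (Fin 2) O) i ^ m i)
        = (γ 1 1 • MvPolynomial.X 0 - γ 1 0 • MvPolynomial.X 1) ^ j *
          (-(γ 0 1 • MvPolynomial.X 0) + γ 0 0 • MvPolynomial.X 1) ^ (m 1) := by
      rw [Fin.prod_univ_two]; rfl
    rw [hprod, algebraMap_eq, coeff_C_mul]
    have hmeq : j < r → m = Finsupp.single (0 : Fin 2) j + Finsupp.single (1 : Fin 2) (g - j) := by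
      intro hjr
      ext i
      fin_cases i
      · simp [hj, Finsupp.single_apply]
      · have : m 1 = g - j := by omega
        simp [this, Finsupp.single_apply]
    by_cases hjk : j ≤ k
    · -- use the divisibility of the coefficient of P
      have hjr : j < r := lt_of_le_of_lt hjk hk
      have h1 : (p : O) ^ (r - j) ∣ coeff m P := by
        rw [hmeq hjr]; exact hfil j hjr
      exact Dvd.dvd.mul_right ((pow_dvd_pow _ (by omega)).trans h1) _
    · -- use the key divisibility from p ∣ c
      push_neg at hjk
      have hv0 : (γ 1 1 • MvPolynomial.X 0 - γ 1 0 • MvPolynomial.X 1 : MvPolynomial (Fin 2) O)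
          = C ((γ 1 1 : ℤ) : O) * X 0 + C ((p : ℕ) : O) * (C (-((c' : ℤ) : O)) * X 1) := by
        rw [hsm, hsm, hc']
        push_cast
        simp only [map_mul, map_neg]
        ring
      have hk0 : (Finsupp.single (0 : Fin 2) k + Finsupp.single (1 : Fin 2) (g - k)) 0 = k := by
        simp [Finsupp.single_apply]
      have h2 : (p : O) ^ (j - k) ∣
          coeff (Finsupp.single (0 : Fin 2) k + Finsupp.single (1 : Fin 2) (g - k))
            ((γ 1 1 • MvPolynomial.X 0 - γ 1 0 • MvPolynomial.X 1) ^ j *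
              (-(γ 0 1 • MvPolynomial.X 0) + γ 0 0 • MvPolynomial.X 1) ^ (m 1)) := by
        rw [hv0]
        have := keyDvd ((γ 1 1 : ℤ) : O) ((p : ℕ) : O) (C (-((c' : ℤ) : O)) * X 1)
          ((-(γ 0 1 • MvPolynomial.X 0) + γ 0 0 • MvPolynomial.X 1) ^ (m 1)) j
          (Finsupp.single (0 : Fin 2) k + Finsupp.single (1 : Fin 2) (g - k))
        rwa [hk0] at this
      by_cases hjr : j < r
      · have h1 : (p : O) ^ (r - j) ∣ coeff m P := by
          rw [hmeq hjr]; exact hfil j hjr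
        have := mul_dvd_mul h1 h2
        rwa [← pow_add, show r - j + (j - k) = r - k by omega] at this
      · exact ((pow_dvd_pow _ (by omega : r - k ≤ j - k)).trans h2).mul_left _
end

section
/- For 0 ≤ s ≤ r, define Fil^{r,s}(V_g(O)) = { Σ b_j X^j Y^{g-j} ∈ Fil^r(V_g(O)) : p^{r-j+1} | b_j for r+1-s ≤ j ≤ r }. Then the quotient Fil^{r,s}/Fil^{r,s+1} is isomorphic as an S_0(p)-module to O/pO with γ = [[a,b],[c,d]] acting by multiplication by det(γ)^{r-s} · a^{g-2r+2s}, and this quotient is generated by the image of p^s X^{r-s} Y^{g-r+s}. -/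
/-!
Write `b_j` for the coefficient of `X^j Y^{g-j}`. Membership in `Fil^{r,s}` asks `p^{w(j)} ∣ b_j`
for a weight `w = filWeight r s` that is non-increasing and drops by at most one per step, and
passing from `s` to `s + 1` only raises `w(r-s) = s` to `s + 1`; this already gives the generator
of `Fil^{r,s}/Fil^{r,s+1}` and its annihilator `p`.
For `γ ∈ S_0(p)` the image of `X^j Y^{g-j}` is `(dX - cY)^j (aY - bX)^{g-j}` with `p ∣ c`,
so its `X^k`-coefficients are divisible by `p^{j-k}`, and the shape of `w` makes every `Fil^{r,s}`
stable. Since `P ≡ u · p^s X^{r-s} Y^{g-r+s}` modulo `Fil^{r,s+1}`, only the generator remains: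
modulo `c` and modulo `X^{r-s+1}` its image is `d^{r-s} a^{g-r+s} X^{r-s} Y^{g-r+s}`, and
`d^{r-s} a^{g-r+s} ≡ det(γ)^{r-s} a^{g-2r+2s}` modulo `c`.
-/

open MvPolynomial

/-- Membership in `Fil^{r,s}(V_g(O))`: `P ∈ Fil^r` and additionally
`p^{r-j+1} ∣ b_j` for `r+1-s ≤ j ≤ r`.  (With this convention
`Fil^{r,r+1} = Fil^{r+1}`.) -/
def inFilRS (O : Type*) [CommRing O] (p g r s : ℕ) (P : MvPolynomial (Fin 2) O) : Prop :=
  inFil O p g r P ∧ ∀ j, r + 1 - s ≤ j → j ≤ r → (p : O) ^ (r - j + 1) ∣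
    MvPolynomial.coeff (Finsupp.single (0 : Fin 2) j + Finsupp.single (1 : Fin 2) (g - j)) P

/-- The generator `p^s X^{r-s} Y^{g-r+s}` of `Fil^{r,s}/Fil^{r,s+1}`. -/
noncomputable def filGen (O : Type*) [CommRing O] (p g r s : ℕ) : MvPolynomial (Fin 2) O :=
  MvPolynomial.monomial
    (Finsupp.single (0 : Fin 2) (r - s) + Finsupp.single (1 : Fin 2) (g - (r - s)))
    ((p : O) ^ s)

open Finsupp (single)

section WeightFil

variable {O : Type*} [CommRing O]

def weightFil (π : O) (w : ℕ → ℕ) : Submodule O (MvPolynomial (Fin 2) O) where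
  carrier := {P | ∀ n, π ^ w (n 0) ∣ coeff n P}
  add_mem' hP hQ n := by simpa only [coeff_add] using dvd_add (hP n) (hQ n)
  zero_mem' n := by simp
  smul_mem' c P hP n := by simpa only [coeff_smul, smul_eq_mul] using (hP n).mul_left c

variable {π : O}

theorem mem_weightFil {w : ℕ → ℕ} {P : MvPolynomial (Fin 2) O} :
    P ∈ weightFil π w ↔ ∀ n, π ^ w (n 0) ∣ coeff n P :=
  Iff.rfl

theorem mul_mem_weightFil {w w₁ w₂ : ℕ → ℕ} (hw : ∀ i l, w (i + l) ≤ w₁ i + w₂ l)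
    {P Q : MvPolynomial (Fin 2) O} (hP : P ∈ weightFil π w₁) (hQ : Q ∈ weightFil π w₂) :
    P * Q ∈ weightFil π w := by
  classical
  intro n
  rw [coeff_mul]
  refine Finset.dvd_sum fun x hx => ?_
  have hn : n 0 = x.1 0 + x.2 0 := by
    rw [← Finset.HasAntidiagonal.mem_antidiagonal.mp hx, Finsupp.add_apply]
  calc π ^ w (n 0) ∣ π ^ (w₁ (x.1 0) + w₂ (x.2 0)) := pow_dvd_pow π (hn ▸ hw _ _)
    _ ∣ _ := pow_add π _ _ ▸ mul_dvd_mul (hP _) (hQ _)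

theorem C_mem_weightFil {b : O} {m : ℕ} (hb : π ^ m ∣ b) :
    C b ∈ weightFil π fun _ => m := by
  intro n
  rw [coeff_C]
  split_ifs
  exacts [hb, dvd_zero _]

theorem mem_weightFil_zero (P : MvPolynomial (Fin 2) O) : P ∈ weightFil π fun _ => 0 :=
  fun n => by simp

theorem linearForm_mem_weightFil {c : O} (hc : π ∣ c) (d : O) :
    C d * X 0 - C c * X 1 ∈ weightFil π fun i => 1 - i := by
  intro n
  rcases Nat.eq_zero_or_pos (n 0) with h | h
  · have hX : coeff n (X 0 : MvPolynomial (Fin 2) O) = 0 := by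
      rw [coeff_X, if_neg]
      rintro rfl
      simp at h
    rw [coeff_sub, coeff_C_mul, coeff_C_mul, hX, h, pow_one]
    simpa using hc.mul_right _
  · simp [Nat.sub_eq_zero_of_le h]

theorem pow_mem_weightFil {L : MvPolynomial (Fin 2) O} (hL : L ∈ weightFil π fun i => 1 - i)
    (j : ℕ) : L ^ j ∈ weightFil π fun i => j - i := by
  induction j with
  | zero => exact fun n => by simp
  | succ j ih => exact pow_succ L j ▸ mul_mem_weightFil (fun i l => by omega) ih hL

theorem matAct_monomial (γ : Matrix (Fin 2) (Fin 2) ℤ) (n : Fin 2 →₀ ℕ) (b : O) :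
    matAct γ (monomial n b) = C b * ((C (γ 1 1 : O) * X 0 - C (γ 1 0 : O) * X 1) ^ n 0 *
      (C (γ 0 0 : O) * X 1 - C (γ 0 1 : O) * X 0) ^ n 1) := by
  rw [matAct, aeval_monomial, Finsupp.prod_fintype _ _ fun _ => pow_zero _, Fin.prod_univ_two]
  simp only [algebraMap_eq, Matrix.cons_val_zero, Matrix.cons_val_one, zsmul_eq_mul,
    ← map_intCast (C : O →+* MvPolynomial (Fin 2) O)]
  ring

theorem matAct_eq_sum (γ : Matrix (Fin 2) (Fin 2) ℤ) (P : MvPolynomial (Fin 2) O) :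
    matAct γ P = ∑ n ∈ P.support, matAct γ (monomial n (coeff n P)) := by
  conv_lhs => rw [← P.support_sum_monomial_coeff]
  exact map_sum (aeval _) _ _

theorem matAct_mem_weightFil {w : ℕ → ℕ} (hw : ∀ j k, w k ≤ w j + (j - k))
    {γ : Matrix (Fin 2) (Fin 2) ℤ} (hc : π ∣ (γ 1 0 : O)) {P : MvPolynomial (Fin 2) O}
    (hP : P ∈ weightFil π w) : matAct γ P ∈ weightFil π w := by
  rw [matAct_eq_sum]
  refine Submodule.sum_mem _ fun n _ => ?_
  rw [matAct_monomial]
  refine mul_mem_weightFil (w₂ := fun k => n 0 - k) (fun i l => ?_) (C_mem_weightFil (hP n)) <|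
    mul_mem_weightFil (fun i l => ?_) (pow_mem_weightFil (linearForm_mem_weightFil hc _) _)
      (mem_weightFil_zero _)
  · have := hw (n 0) (i + l)
    omega
  · omega

theorem dvd_coeff_linearForm_pow_mul_pow_sub_monomial (a b c d : O) (j m : ℕ)
    {n : Fin 2 →₀ ℕ} (hn : n 0 ≤ j) :
    c ∣ coeff n ((C d * X 0 - C c * X 1) ^ j * (C a * X 1 - C b * X 0) ^ m -
      monomial (single 0 j + single 1 m) (d ^ j * a ^ m)) := by
  obtain ⟨A, hA⟩ :=
    sub_dvd_pow_sub_pow (C d * X 0 - C c * X 1 : MvPolynomial (Fin 2) O) (C d * X 0) j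
  obtain ⟨B, hB⟩ :=
    sub_dvd_pow_sub_pow (C a * X 1 - C b * X 0 : MvPolynomial (Fin 2) O) (C a * X 1) m
  have hmono : monomial (single 0 j + single 1 m) (d ^ j * a ^ m) =
      (C d * X 0 : MvPolynomial (Fin 2) O) ^ j * (C a * X 1) ^ m := by
    simp only [mul_pow, ← C_pow, X_pow_eq_monomial, C_mul_monomial, monomial_mul, mul_one]
  have hsplit : (C d * X 0 - C c * X 1) ^ j * (C a * X 1 - C b * X 0) ^ m -
      monomial (single 0 j + single 1 m) (d ^ j * a ^ m) =
      C c * (-(X 1 * A * (C a * X 1 - C b * X 0) ^ m)) +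
        X 0 ^ (j + 1) * (-(C d ^ j * C b * B)) := by
    rw [hmono]
    linear_combination (C a * X 1 - C b * X 0) ^ m * hA + (C d * X 0) ^ j * hB
  rw [hsplit, coeff_add, coeff_C_mul, X_pow_eq_monomial, coeff_monomial_mul', if_neg, add_zero]
  · exact dvd_mul_right c _
  · rw [Finsupp.single_le_iff]
    omega

end WeightFil

/-- `Fil^{r,s}` is `weightFil p (filWeight r s)` on polynomials homogeneous of degree `g`. -/
def filWeight (r s j : ℕ) : ℕ := if r + 1 - s ≤ j ∧ j ≤ r then r - j + 1 else r - j

theorem filWeight_le_add_sub (r s j k : ℕ) : filWeight r s k ≤ filWeight r s j + (j - k) := by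
  unfold filWeight
  split_ifs <;> omega

theorem filWeight_self {r s : ℕ} (hs : s ≤ r) : filWeight r s (r - s) = s := by
  unfold filWeight
  split_ifs <;> omega

theorem filWeight_succ_self {r s : ℕ} (hs : s ≤ r) : filWeight r (s + 1) (r - s) = s + 1 := by
  unfold filWeight
  split_ifs <;> omega

theorem filWeight_succ_of_ne {r s k : ℕ} (hs : s ≤ r) (hk : k ≠ r - s) :
    filWeight r (s + 1) k = filWeight r s k := by
  unfold filWeight
  split_ifs <;> omega

section Filtration

variable {O : Type*} [CommRing O] {p g r s : ℕ}

theorem single_zero_add_single_one_apply_zero (j m : ℕ) :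
    (single (0 : Fin 2) j + single 1 m : Fin 2 →₀ ℕ) 0 = j := by
  simp

theorem single_zero_add_single_one_apply_one (j m : ℕ) :
    (single (0 : Fin 2) j + single 1 m : Fin 2 →₀ ℕ) 1 = m := by
  simp

theorem dvd_coeff_of_mem_weightFil {π : O} {w : ℕ → ℕ} {P : MvPolynomial (Fin 2) O}
    (hP : P ∈ weightFil π w) (j m : ℕ) : π ^ w j ∣ coeff (single 0 j + single 1 m) P := by
  have := mem_weightFil.mp hP (single 0 j + single 1 m)
  rwa [single_zero_add_single_one_apply_zero] at this

theorem MvPolynomial.IsHomogeneous.eq_single_add_single {P : MvPolynomial (Fin 2) O}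
    (hP : P.IsHomogeneous g) {n : Fin 2 →₀ ℕ} (hn : coeff n P ≠ 0) :
    n = single 0 (n 0) + single 1 (g - n 0) := by
  have hdeg : n 0 + n 1 = g := by
    by_contra h
    refine hn (hP.coeff_eq_zero ?_)
    rwa [Finsupp.degree_eq_sum, Fin.sum_univ_two]
  ext i
  fin_cases i
  · simp
  · simp
    omega

theorem inFilRS_of_mem_weightFil {P : MvPolynomial (Fin 2) O}
    (hP : P ∈ weightFil (p : O) (filWeight r s)) : inFilRS O p g r s P := by
  have hcoeff (j : ℕ) := dvd_coeff_of_mem_weightFil hP j (g - j)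
  refine ⟨fun j _ => (pow_dvd_pow _ ?_).trans (hcoeff j), fun j h₁ h₂ => ?_⟩
  · unfold filWeight
    split_ifs <;> omega
  · simpa [filWeight, h₁, h₂] using hcoeff j

theorem mem_weightFil_of_inFilRS {P : MvPolynomial (Fin 2) O} (hP : P.IsHomogeneous g)
    (h : inFilRS O p g r s P) : P ∈ weightFil (p : O) (filWeight r s) := by
  refine mem_weightFil.mpr fun n => ?_
  by_cases hn : coeff n P = 0
  · simp [hn]
  rw [hP.eq_single_add_single hn, single_zero_add_single_one_apply_zero, filWeight]
  split_ifs with h'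
  · exact h.2 _ h'.1 h'.2
  · by_cases hr : n 0 < r
    · exact h.1 _ hr
    · simp [Nat.sub_eq_zero_of_le (not_lt.mp hr)]

theorem dvd_diag_pow_mul_sub_det_pow_mul (a b c d : O) (j e : ℕ) :
    c ∣ d ^ j * a ^ (e + j) - (a * d - b * c) ^ j * a ^ e := by
  have hdet : a * d - (a * d - b * c) ∣ (a * d) ^ j - (a * d - b * c) ^ j :=
    sub_dvd_pow_sub_pow _ _ _
  rw [show a * d - (a * d - b * c) = b * c by ring] at hdet
  calc c ∣ (a * d) ^ j - (a * d - b * c) ^ j := (dvd_mul_left c b).trans hdet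
    _ ∣ a ^ e * ((a * d) ^ j - (a * d - b * c) ^ j) := dvd_mul_left _ _
    _ = d ^ j * a ^ (e + j) - (a * d - b * c) ^ j * a ^ e := by ring

theorem exists_sub_C_mul_filGen_mem_weightFil (hs : s ≤ r) {P : MvPolynomial (Fin 2) O}
    (hP : P.IsHomogeneous g) (hPs : P ∈ weightFil (p : O) (filWeight r s)) :
    ∃ c, P - C c * filGen O p g r s ∈ weightFil (p : O) (filWeight r (s + 1)) := by
  obtain ⟨c, hc⟩ : (p : O) ^ s ∣ coeff (single 0 (r - s) + single 1 (g - (r - s))) P :=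
    filWeight_self hs ▸ dvd_coeff_of_mem_weightFil hPs _ _
  refine ⟨c, mem_weightFil.mpr fun n => ?_⟩
  rw [filGen, C_mul_monomial, coeff_sub, coeff_monomial]
  split_ifs with hn
  · rw [← hn, hc, mul_comm, sub_self]
    exact dvd_zero _
  rw [sub_zero]
  rcases eq_or_ne (n 0) (r - s) with h0 | h0
  · have hzero : coeff n P = 0 := by
      by_contra hne
      exact hn (by rw [hP.eq_single_add_single hne, h0])
    rw [hzero]
    exact dvd_zero _
  · rw [filWeight_succ_of_ne hs h0]
    exact mem_weightFil.mp hPs n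

theorem C_mul_filGen_mem_weightFil_succ {c : O} (hs : s ≤ r) (hc : (p : O) ∣ c) :
    C c * filGen O p g r s ∈ weightFil (p : O) (filWeight r (s + 1)) := by
  refine mem_weightFil.mpr fun n => ?_
  rw [filGen, C_mul_monomial, coeff_monomial]
  split_ifs with hn
  · rw [← hn, single_zero_add_single_one_apply_zero, filWeight_succ_self hs, pow_succ,
      mul_comm c]
    exact mul_dvd_mul_left _ hc
  · exact dvd_zero _

theorem inFilRS_succ_C_mul_filGen_iff [IsDomain O] (hpO : (p : O) ≠ 0) (hs : s ≤ r) (c : O) :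
    inFilRS O p g r (s + 1) (C c * filGen O p g r s) ↔ (p : O) ∣ c := by
  refine ⟨fun h => ?_, fun hc =>
    inFilRS_of_mem_weightFil (C_mul_filGen_mem_weightFil_succ hs hc)⟩
  have hdvd := h.2 (r - s) (by omega) (by omega)
  rw [filGen, C_mul_monomial, coeff_monomial, if_pos rfl, show r - (r - s) + 1 = s + 1 by omega,
    pow_succ, mul_comm c] at hdvd
  exact (mul_dvd_mul_iff_left (pow_ne_zero s hpO)).mp hdvd

theorem matAct_filGen_sub_smul_mem_weightFil (hs : s ≤ r) (hexp : 2 * r ≤ g + 2 * s)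
    {γ : Matrix (Fin 2) (Fin 2) ℤ} (hc : (p : O) ∣ (γ 1 0 : O)) :
    matAct γ (filGen O p g r s) -
        (γ.det ^ (r - s) * γ 0 0 ^ (g + 2 * s - 2 * r)) • filGen O p g r s ∈
      weightFil (p : O) (filWeight r (s + 1)) := by
  set a : O := ((γ 0 0 : ℤ) : O)
  set b : O := ((γ 0 1 : ℤ) : O)
  set c : O := ((γ 1 0 : ℤ) : O)
  set d : O := ((γ 1 1 : ℤ) : O)
  set LM : MvPolynomial (Fin 2) O :=
    (C d * X 0 - C c * X 1) ^ (r - s) * (C a * X 1 - C b * X 0) ^ (g - (r - s))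
  set S : O := (a * d - b * c) ^ (r - s) * a ^ (g + 2 * s - 2 * r)
  have hdiff : matAct γ (filGen O p g r s) -
      (γ.det ^ (r - s) * γ 0 0 ^ (g + 2 * s - 2 * r)) • filGen O p g r s =
      C ((p : O) ^ s) * (LM - monomial (single 0 (r - s) + single 1 (g - (r - s))) S) := by
    have hS : ((γ.det ^ (r - s) * γ 0 0 ^ (g + 2 * s - 2 * r) : ℤ) : O) = S := by
      simp only [S, a, b, c, d, Matrix.det_fin_two]
      push_cast
      ring
    rw [filGen, matAct_monomial, single_zero_add_single_one_apply_zero,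
      single_zero_add_single_one_apply_one, zsmul_eq_mul,
      ← map_intCast (C : O →+* MvPolynomial (Fin 2) O), C_mul_monomial, mul_sub, C_mul_monomial,
      hS, mul_comm S]
  have hLM : LM ∈ weightFil (p : O) fun k => r - s - k :=
    mul_mem_weightFil (fun i l => by omega) (pow_mem_weightFil (linearForm_mem_weightFil hc d) _)
      (mem_weightFil_zero _)
  have hleading : (p : O) ∣ d ^ (r - s) * a ^ (g - (r - s)) - S :=
    hc.trans (show g - (r - s) = g + 2 * s - 2 * r + (r - s) by omega ▸
      dvd_diag_pow_mul_sub_det_pow_mul a b c d _ _)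
  rw [hdiff]
  set n₀ : Fin 2 →₀ ℕ := single 0 (r - s) + single 1 (g - (r - s))
  refine mem_weightFil.mpr fun n => ?_
  rw [coeff_C_mul]
  rcases eq_or_ne (n 0) (r - s) with hn | hn
  · rw [hn, filWeight_succ_self hs, pow_succ]
    refine mul_dvd_mul_left _ ?_
    have hsplit : LM - monomial n₀ S = (LM - monomial n₀ (d ^ (r - s) * a ^ (g - (r - s)))) +
        monomial n₀ (d ^ (r - s) * a ^ (g - (r - s)) - S) := by
      rw [map_sub]
      ring
    rw [hsplit, coeff_add, coeff_monomial]
    refine dvd_add (hc.trans (dvd_coeff_linearForm_pow_mul_pow_sub_monomial a b c d _ _ hn.le)) ?_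
    split_ifs
    exacts [hleading, dvd_zero _]
  · rw [coeff_sub, coeff_monomial, if_neg, sub_zero]
    · have hw := filWeight_le_add_sub r s (r - s) (n 0)
      rw [filWeight_self hs, ← filWeight_succ_of_ne hs hn] at hw
      calc (p : O) ^ filWeight r (s + 1) (n 0) ∣ (p : O) ^ (s + (r - s - n 0)) := pow_dvd_pow _ hw
        _ ∣ _ := pow_add (p : O) _ _ ▸ mul_dvd_mul_left _ (mem_weightFil.mp hLM n)
    · rintro rfl
      exact hn (single_zero_add_single_one_apply_zero _ _)

theorem matAct_sub_smul_mem_weightFil (hs : s ≤ r) (hexp : 2 * r ≤ g + 2 * s)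
    {γ : Matrix (Fin 2) (Fin 2) ℤ} (hc : (p : O) ∣ (γ 1 0 : O)) {P : MvPolynomial (Fin 2) O}
    (hP : P.IsHomogeneous g)
    (hPs : P ∈ weightFil (p : O) (filWeight r s)) :
    matAct γ P - (γ.det ^ (r - s) * γ 0 0 ^ (g + 2 * s - 2 * r)) • P ∈
      weightFil (p : O) (filWeight r (s + 1)) := by
  obtain ⟨c, hrest⟩ := exists_sub_C_mul_filGen_mem_weightFil hs hP hPs
  set G := filGen O p g r s
  set S := γ.det ^ (r - s) * γ 0 0 ^ (g + 2 * s - 2 * r)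
  have hsplit : matAct γ P - S • P =
      (matAct γ (P - C c * G) - S • (P - C c * G)) + c • (matAct γ G - S • G) := by
    simp only [matAct, map_sub, map_mul, aeval_C, algebraMap_eq, ← C_mul', zsmul_eq_mul]
    ring
  rw [hsplit]
  refine add_mem (sub_mem ?_ (Submodule.smul_of_tower_mem _ S hrest))
    (Submodule.smul_mem _ c (matAct_filGen_sub_smul_mem_weightFil hs hexp hc))
  exact matAct_mem_weightFil (filWeight_le_add_sub r (s + 1)) hc hrest

end Filtration

theorem fil_quotient_structure_general (p g r s : ℕ)
    (O : Type*) [CommRing O] [IsDomain O] (hpO : (p : O) ≠ 0)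
    (hs : s ≤ r) (hexp : 2 * r ≤ g + 2 * s) :
    (∀ P : MvPolynomial (Fin 2) O, P.IsHomogeneous g → inFilRS O p g r s P →
        ∃ c : O, inFilRS O p g r (s + 1) (P - MvPolynomial.C c * filGen O p g r s)) ∧
      (∀ c : O, inFilRS O p g r (s + 1) (MvPolynomial.C c * filGen O p g r s) ↔ (p : O) ∣ c) ∧
      (∀ γ : Matrix (Fin 2) (Fin 2) ℤ, memS0 p γ →
        ∀ P : MvPolynomial (Fin 2) O, P.IsHomogeneous g → inFilRS O p g r s P →
          inFilRS O p g r (s + 1)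
            (matAct γ P - (γ.det ^ (r - s) * (γ 0 0) ^ (g + 2 * s - 2 * r)) • P)) := by
  refine ⟨fun P hP hPs => ?_, inFilRS_succ_C_mul_filGen_iff hpO hs, fun γ hγ P hP hPs => ?_⟩
  · obtain ⟨c, hc⟩ :=
      exists_sub_C_mul_filGen_mem_weightFil hs hP (mem_weightFil_of_inFilRS hP hPs)
    exact ⟨c, inFilRS_of_mem_weightFil hc⟩
  · have hc : (p : O) ∣ (γ 1 0 : O) := by
      simpa using map_dvd (Int.castRingHom O) hγ.2.1
    exact inFilRS_of_mem_weightFil <|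
      matAct_sub_smul_mem_weightFil hs hexp hc hP (mem_weightFil_of_inFilRS hP hPs)

/-- For `0 ≤ s ≤ r`, the quotient `Fil^{r,s}/Fil^{r,s+1}` is isomorphic, as an
`S_0(p)`-module, to `O/pO` with `γ = [[a,b],[c,d]]` acting by multiplication by
`det(γ)^{r-s} · a^{g-2r+2s}`, generated by the image of `p^s X^{r-s} Y^{g-r+s}`:
(i) every `P ∈ Fil^{r,s}` is congruent to a multiple `c · p^s X^{r-s} Y^{g-r+s}`
modulo `Fil^{r,s+1}`; (ii) `c · p^s X^{r-s} Y^{g-r+s} ∈ Fil^{r,s+1}` iff `p ∣ c`;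
(iii) for `γ ∈ S_0(p)` and `P ∈ Fil^{r,s}`,
`P|γ ≡ det(γ)^{r-s} a^{g-2r+2s} · P mod Fil^{r,s+1}`. -/
theorem fil_quotient_structure (p g r s : ℕ) (hp : p.Prime)
    (O : Type*) [CommRing O] [IsDomain O] (hpO : (p : O) ≠ 0)
    (hs : s ≤ r) (hrg : r ≤ g) (hexp : 2 * r ≤ g + 2 * s) :
    (∀ P : MvPolynomial (Fin 2) O, P.IsHomogeneous g → inFilRS O p g r s P →
        ∃ c : O, inFilRS O p g r (s + 1) (P - MvPolynomial.C c * filGen O p g r s)) ∧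
      (∀ c : O, inFilRS O p g r (s + 1) (MvPolynomial.C c * filGen O p g r s) ↔ (p : O) ∣ c) ∧
      (∀ γ : Matrix (Fin 2) (Fin 2) ℤ, memS0 p γ →
        ∀ P : MvPolynomial (Fin 2) O, P.IsHomogeneous g → inFilRS O p g r s P →
          inFilRS O p g r (s + 1)
            (matAct γ P - (γ.det ^ (r - s) * (γ 0 0) ^ (g + 2 * s - 2 * r)) • P)) :=
  fil_quotient_structure_general p g r s O hpO hs hexp
end

section
/- Let φ: Div^0(P^1(Q)) → V_g(O) be a Γ-invariant modular symbol (φ(γD)|γ = φ(D) for γ ∈ Γ ⊆ SL_2(Z)). Define the level-n Mazur–Tate element θ_n(φ) = Σ_{a ∈ (Z/p^nZ)^×} φ({∞} - {a/p^n})(0,1) · σ_a ∈ O[(Z/p^nZ)^×]. Then θ_n(φ | [[p,0],[0,1]]) = p^g · ν_{n/n-1}(θ_{n-1}(φ)), where ν_{n/n-1} is the corestriction map O[(Z/p^{n-1}Z)^×] → O[(Z/p^nZ)^×] sending σ_a to Σ_{b ≡ a mod p^{n-1}} σ_b. -/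
open MvPolynomial

/-- The action of an integral 2×2 matrix on `P^1(ℚ)` (modelled as `Option ℚ`,
with `none = ∞`) by fractional linear transformations. -/
noncomputable def moeb (γ : Matrix (Fin 2) (Fin 2) ℤ) : Option ℚ → Option ℚ
  | none => if γ 1 0 = 0 then none else some ((γ 0 0 : ℚ) / (γ 1 0 : ℚ))
  | some q => if (γ 1 0 : ℚ) * q + (γ 1 1 : ℚ) = 0 then none
      else some (((γ 0 0 : ℚ) * q + (γ 0 1 : ℚ)) / ((γ 1 0 : ℚ) * q + (γ 1 1 : ℚ)))

/-- The degree of a divisor on `P^1(ℚ)`. -/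
noncomputable def degDiv (D : Option ℚ →₀ ℤ) : ℤ := D.sum fun _ n => n

/-- The level-`m` Mazur–Tate element of a `V_g(O)`-valued modular symbol `φ`:
`θ_m(φ) = Σ_{a ∈ (ℤ/m)^×} φ({∞} - {a/m})(0,1) · σ_a ∈ O[(ℤ/m)^×]`. -/
noncomputable def MT (O : Type*) [CommRing O]
    (φ : (Option ℚ →₀ ℤ) → MvPolynomial (Fin 2) O) (m : ℕ) [NeZero m] :
    MonoidAlgebra O (ZMod m)ˣ :=
  ∑ u : (ZMod m)ˣ, MonoidAlgebra.single u
    (MvPolynomial.eval ![0, 1]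
      (φ (Finsupp.single none 1 -
        Finsupp.single (some ((((u : ZMod m).val : ℚ)) / (m : ℚ))) 1)))

/-- The corestriction map `ν : O[(ℤ/a)^×] → O[(ℤ/b)^×]` (for `a ∣ b`), sending
`σ_a` to the sum of the `σ_b` with `b ≡ a mod a`. -/
noncomputable def coresU (O : Type*) [CommRing O] (a b : ℕ) [NeZero a] [NeZero b] (h : a ∣ b)
    (θ : MonoidAlgebra O (ZMod a)ˣ) : MonoidAlgebra O (ZMod b)ˣ :=
  MonoidAlgebra.ofCoeff (Finsupp.equivFunOnFinite.symm
    (fun τ => θ.coeff (Units.map (ZMod.castHom h (ZMod a)).toMonoidHom τ)))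

/-!
The matrix `[[p,0],[0,1]]` sends the cusp `a/p^n` to `a/p^{n-1}` and fixes `∞`, while on the
evaluation point `(0,1)` it acts as multiplication by `p`, which a homogeneous polynomial of
degree `g` turns into the factor `p^g`. Since `φ` is invariant under the
translations `[[1,k],[0,1]]`, the value at `a/p^{n-1}` only depends on `a mod p^{n-1}`, i.e. on
the image of `σ_a` in `(ℤ/p^{n-1})^×`, which is exactly the coefficient of `σ_a` in the
corestriction.
-/

theorem MvPolynomial.IsHomogeneous.eval_smul {R σ : Type*} [CommRing R]
    {P : MvPolynomial σ R} {g : ℕ} (hP : P.IsHomogeneous g) (c : R) (x : σ → R) :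
    eval (c • x) P = c ^ g * eval x P := by
  rw [eval_eq, eval_eq, Finset.mul_sum]
  refine Finset.sum_congr rfl fun d hd => ?_
  simp only [Pi.smul_apply, smul_eq_mul, mul_pow, Finset.prod_mul_distrib,
    Finset.prod_pow_eq_pow_sum, ← hP.degree_eq_sum_deg_support hd]
  ring

theorem eval_matAct {R : Type*} [CommRing R] (γ : Matrix (Fin 2) (Fin 2) ℤ)
    (P : MvPolynomial (Fin 2) R) (x : Fin 2 → R) :
    eval x (matAct γ P)
      = eval ![γ 1 1 • x 0 - γ 1 0 • x 1, -(γ 0 1 • x 0) + γ 0 0 • x 1] P := by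
  rw [matAct, aeval_eq_bind₁]
  refine (eval₂Hom_bind₁ _ _ _ _).trans (congrArg (eval · P) (funext fun i => ?_))
  fin_cases i <;> simp

theorem eval_zero_one_matAct_upper {R : Type*} [CommRing R] (a b : ℤ)
    (P : MvPolynomial (Fin 2) R) :
    eval ![0, 1] (matAct !![a, b; 0, 1] P) = eval ((a : R) • ![0, 1]) P := by
  rw [eval_matAct]
  refine congrArg (eval · P) (funext fun i => ?_)
  fin_cases i <;> simp

noncomputable def divInfSub (q : ℚ) : Option ℚ →₀ ℤ :=
  Finsupp.single none 1 - Finsupp.single (some q) 1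

theorem degDiv_divInfSub (q : ℚ) : degDiv (divInfSub q) = 0 := by
  rw [degDiv, divInfSub, Finsupp.sum_sub_index (fun _ _ _ => rfl),
    Finsupp.sum_single_index rfl, Finsupp.sum_single_index rfl, sub_self]

theorem mapDomain_moeb_upper_divInfSub (a b : ℤ) (q : ℚ) :
    Finsupp.mapDomain (moeb !![a, b; 0, 1]) (divInfSub q) = divInfSub (a * q + b) := by
  simp [divInfSub, Finsupp.mapDomain_sub, Finsupp.mapDomain_single, moeb]

theorem eval_divInfSub_add_intCast {O : Type*} [CommRing O]
    {φ : (Option ℚ →₀ ℤ) → MvPolynomial (Fin 2) O}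
    (hT : ∀ k : ℤ, ∀ D, degDiv D = 0 →
      matAct !![1, k; 0, 1] (φ (Finsupp.mapDomain (moeb !![1, k; 0, 1]) D)) = φ D)
    (q : ℚ) (k : ℤ) :
    eval ![0, 1] (φ (divInfSub (q + k))) = eval ![0, 1] (φ (divInfSub q)) := by
  have h := hT k _ (degDiv_divInfSub q)
  rw [mapDomain_moeb_upper_divInfSub, Int.cast_one, one_mul] at h
  rw [← h, eval_zero_one_matAct_upper, Int.cast_one, one_smul]

theorem MT_coeff (O : Type*) [CommRing O] (φ : (Option ℚ →₀ ℤ) → MvPolynomial (Fin 2) O)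
    (m : ℕ) [NeZero m] (u : (ZMod m)ˣ) :
    (MT O φ m).coeff u = eval ![0, 1] (φ (divInfSub ((u : ZMod m).val / m))) := by
  classical
  simp [MT, MonoidAlgebra.coeff_sum, Finsupp.single_apply, divInfSub]

theorem coresU_coeff (O : Type*) [CommRing O] (a b : ℕ) [NeZero a] [NeZero b] (h : a ∣ b)
    (θ : MonoidAlgebra O (ZMod a)ˣ) (τ : (ZMod b)ˣ) :
    (coresU O a b h θ).coeff τ = θ.coeff (Units.map (ZMod.castHom h (ZMod a)).toMonoidHom τ) :=
  rfl

theorem ZMod.val_castHom {a b : ℕ} [NeZero a] [NeZero b] (h : a ∣ b) (x : ZMod b) :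
    (ZMod.castHom h (ZMod a) x).val = x.val % a := by
  rw [ZMod.castHom_apply, ← ZMod.natCast_val, ZMod.val_natCast]

theorem Nat.cast_div_eq_mod_div_add {K : Type*} [Field K] [CharZero K] (a : ℕ) {m : ℕ}
    (hm : m ≠ 0) : (a : K) / m = ((a % m : ℕ) : K) / m + (a / m : ℕ) := by
  rw [div_add' _ _ _ (Nat.cast_ne_zero.mpr hm), ← Nat.cast_mul, ← Nat.cast_add, Nat.mul_comm,
    Nat.mod_add_div]

theorem MT_slash_p_general (p N n g : ℕ) [NeZero p] (hn : 1 ≤ n)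
    (O : Type*) [CommRing O]
    (φ : (Option ℚ →₀ ℤ) → MvPolynomial (Fin 2) O)
    (hhom : ∀ D, (φ D).IsHomogeneous g)
    (hinv : ∀ γ : Matrix (Fin 2) (Fin 2) ℤ, γ.det = 1 → (N : ℤ) ∣ γ 1 0 →
      ∀ D, degDiv D = 0 → matAct γ (φ (Finsupp.mapDomain (moeb γ) D)) = φ D) :
    MT O (fun D => matAct !![(p : ℤ), 0; 0, 1]
        (φ (Finsupp.mapDomain (moeb !![(p : ℤ), 0; 0, 1]) D))) (p ^ n)
      = (p : O) ^ g • coresU O (p ^ (n - 1)) (p ^ n) (pow_dvd_pow p (Nat.sub_le n 1))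
          (MT O φ (p ^ (n - 1))) := by
  have hpn : p ^ n = p ^ (n - 1) * p := by rw [← pow_succ, Nat.sub_add_cancel hn]
  have hT : ∀ k : ℤ, ∀ D, degDiv D = 0 →
      matAct !![1, k; 0, 1] (φ (Finsupp.mapDomain (moeb !![1, k; 0, 1]) D)) = φ D :=
    fun k => hinv _ (by simp [Matrix.det_fin_two_of]) (by simp)
  refine MonoidAlgebra.coeff_injective (Finsupp.ext fun τ => ?_)
  simp only [MonoidAlgebra.coeff_smul_apply, coresU_coeff, MT_coeff, smul_eq_mul]
  rw [mapDomain_moeb_upper_divInfSub, eval_zero_one_matAct_upper, (hhom _).eval_smul,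
    Int.cast_natCast]
  congr 1
  set a := (τ : ZMod (p ^ n)).val
  have hcusp : ((p : ℤ) : ℚ) * (a / (p ^ n : ℕ)) + ((0 : ℤ) : ℚ)
      = ((a % p ^ (n - 1) : ℕ) : ℚ) / (p ^ (n - 1) : ℕ) + ((a / p ^ (n - 1) : ℕ) : ℤ) := by
    rw [Int.cast_natCast, Int.cast_zero, add_zero, hpn, Nat.cast_mul, ← mul_div_assoc,
      mul_comm (p : ℚ), mul_div_mul_right _ _ (Nat.cast_ne_zero.mpr (NeZero.ne p)),
      Int.cast_natCast, Nat.cast_div_eq_mod_div_add _ (NeZero.ne _)]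
  rw [hcusp, eval_divInfSub_add_intCast hT, Units.coe_map, RingHom.toMonoidHom_eq_coe,
    MonoidHom.coe_coe, ZMod.val_castHom]

/-- Let `φ : Div^0(P^1(ℚ)) → V_g(O)` be a `Γ_0(N)`-invariant modular symbol
(`φ(γD)|γ = φ(D)`).  Then `θ_n(φ | [[p,0],[0,1]]) = p^g · ν_{n/n-1}(θ_{n-1}(φ))`,
where `ν_{n/n-1}` is the corestriction map `O[(ℤ/p^{n-1})^×] → O[(ℤ/p^n)^×]`. -/
theorem MT_slash_p (p N n g : ℕ) (hp : p.Prime) [NeZero p] (hpN : ¬ p ∣ N) (hn : 1 ≤ n)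
    (O : Type*) [CommRing O]
    (φ : (Option ℚ →₀ ℤ) → MvPolynomial (Fin 2) O)
    (hhom : ∀ D, (φ D).IsHomogeneous g)
    (hadd : ∀ D D', degDiv D = 0 → degDiv D' = 0 → φ (D + D') = φ D + φ D')
    (hinv : ∀ γ : Matrix (Fin 2) (Fin 2) ℤ, γ.det = 1 → (N : ℤ) ∣ γ 1 0 →
      ∀ D, degDiv D = 0 → matAct γ (φ (Finsupp.mapDomain (moeb γ) D)) = φ D) :
    MT O (fun D => matAct !![(p : ℤ), 0; 0, 1]
        (φ (Finsupp.mapDomain (moeb !![(p : ℤ), 0; 0, 1]) D))) (p ^ n)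
      = (p : O) ^ g • coresU O (p ^ (n - 1)) (p ^ n) (pow_dvd_pow p (Nat.sub_le n 1))
          (MT O φ (p ^ (n - 1))) :=
  MT_slash_p_general p N n g hn O φ hhom hinv
end

section
/- Let φ: Div^0(P^1(Q)) → V_g(O) be a Γ_0(N)-invariant modular symbol (p ∤ N) that is a T_p-eigensymbol with eigenvalue λ, takes all its values in Fil^r(V_g(O)), additionally satisfies φ|[[0,-1],[N,0]] = u·φ for some u ∈ O^×·N^{g/2} (functional equation), and has ||φ|| = 1 (all values have coefficients in O, some coefficient a unit). Then ord_p(λ) ≥ r. -/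
/-!
The `p` matrices `[[1,a],[0,p]]` send `Fil^r(V_g(O))` into `p^r V_g(O)`: the monomial
`X^j Y^(g-j)` picks up the factor `p^j`, and for `j < r` its coefficient is already divisible
by `p^(r-j)`. The remaining Hecke term, for `[[p,0],[0,1]]`, is moved by the functional equation
onto `[[1,0],[0,p]]`, which has the same property, at the cost of the factor `u`; this factor is
prime to `p` because `p ∤ N`. Hence `p^r` divides every coefficient of `λ φ`, and a unit
coefficient of `φ` forces `ord_p(λ) ≥ r`.
-/

open MvPolynomial

theorem aeval_monomial_fin2 {R S : Type*} [CommSemiring R] [CommSemiring S] [Algebra R S]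
    (f : Fin 2 → S) (d : Fin 2 →₀ ℕ) (c : R) :
    aeval f (monomial d c) = algebraMap R S c * f 0 ^ d 0 * f 1 ^ d 1 := by
  rw [aeval_monomial, Finsupp.prod_fintype _ _ (fun _ => pow_zero _), Fin.prod_univ_two,
    mul_assoc]

theorem C_dvd_of_C_dvd_smul {R σ : Type*} [CommSemiring R] {a u : R} {P : MvPolynomial σ R}
    (h : IsCoprime a u) (hdvd : C a ∣ u • P) : C a ∣ P :=
  (h.map C).dvd_of_dvd_mul_left (by rwa [← smul_eq_C_mul])

theorem le_addValuation_of_pow_dvd {R : Type*} [Ring R] (v : AddValuation R (WithTop ℚ))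
    {p : ℕ} (hvp : v p = 1) (hnn : ∀ x, 0 ≤ v x) {r : ℕ} {x : R} (h : (p : R) ^ r ∣ x) :
    (r : WithTop ℚ) ≤ v x := by
  obtain ⟨y, rfl⟩ := h
  rw [v.map_mul, v.map_pow, hvp, nsmul_one]
  exact le_add_of_nonneg_right (hnn y)

section MatAct

variable {R : Type*} [CommRing R]

theorem matAct_mul (γ δ : Matrix (Fin 2) (Fin 2) ℤ) (P : MvPolynomial (Fin 2) R) :
    matAct δ (matAct γ P) = matAct (γ * δ) P := by
  unfold matAct
  rw [comp_aeval_apply]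
  congr 2
  funext i
  fin_cases i <;>
    simp only [Fin.zero_eta, Fin.mk_one, Matrix.cons_val_zero, Matrix.cons_val_one, map_sub,
      map_add, map_neg, map_zsmul, aeval_X, Matrix.mul_apply, Fin.sum_univ_two] <;>
    module

theorem matAct_smul (γ : Matrix (Fin 2) (Fin 2) ℤ) (c : R) (P : MvPolynomial (Fin 2) R) :
    matAct γ (c • P) = c • matAct γ P :=
  map_smul _ c P

theorem C_dvd_matAct {c : R} {P : MvPolynomial (Fin 2) R} (γ : Matrix (Fin 2) (Fin 2) ℤ)
    (h : C c ∣ P) : C c ∣ matAct γ P :=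
  (dvd_of_eq (aeval_C _ c).symm).trans (map_dvd (aeval _) h)

end MatAct

section Filtration

variable {R : Type*} [CommRing R] {p g r : ℕ} {P : MvPolynomial (Fin 2) R}

theorem pow_dvd_coeff_mul_pow_of_inFil (hP : P.IsHomogeneous g) (hF : inFil R p g r P)
    (d : Fin 2 →₀ ℕ) : (p : R) ^ r ∣ coeff d P * (p : R) ^ d 0 := by
  by_cases hd : coeff d P = 0
  · simp [hd]
  have hdeg : d 0 + d 1 = g := by
    simpa [Finsupp.weight_apply, Finsupp.sum_fintype] using hP hd
  rcases lt_or_ge (d 0) r with hlt | hge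
  · have hcoeff := hF (d 0) hlt
    rw [show g - d 0 = d 1 by omega, show Finsupp.single 0 (d 0) + Finsupp.single 1 (d 1) = d by
      ext i; fin_cases i <;> simp] at hcoeff
    simpa [← pow_add, Nat.sub_add_cancel hlt.le] using mul_dvd_mul_right hcoeff ((p : R) ^ d 0)
  · exact (pow_dvd_pow _ hge).mul_left _

theorem C_pow_dvd_matAct_of_inFil (hP : P.IsHomogeneous g) (hF : inFil R p g r P)
    {γ : Matrix (Fin 2) (Fin 2) ℤ} (h10 : γ 1 0 = 0) (h11 : γ 1 1 = p) :
    C ((p : R) ^ r) ∣ matAct γ P := by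
  rw [matAct, h10, h11, P.as_sum, map_sum]
  refine Finset.dvd_sum fun d _ => ?_
  rw [aeval_monomial_fin2]
  simp only [Matrix.cons_val_zero, zero_smul, sub_zero, zsmul_eq_mul, Int.cast_natCast, mul_pow,
    algebraMap_eq, ← C_eq_coe_nat, ← C_pow]
  rw [← mul_assoc, ← C_mul]
  exact ((map_dvd C (pow_dvd_coeff_mul_pow_of_inFil hP hF d)).mul_right _).mul_right _

end Filtration

theorem degDiv_mapDomain (f : Option ℚ → Option ℚ) (D : Option ℚ →₀ ℤ) :
    degDiv (Finsupp.mapDomain f D) = degDiv D :=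
  Finsupp.sum_mapDomain_index (fun _ => rfl) (fun _ _ _ => rfl)

theorem slope_ge_of_fil_general (p N g r : ℕ) (hp : p.Prime) (hpN : ¬ p ∣ N)
    (O : Type*) [CommRing O]
    (v : AddValuation O (WithTop ℚ)) (hvp : v (p : O) = 1) (hnn : ∀ x : O, 0 ≤ v x)
    (φ : (Option ℚ →₀ ℤ) → MvPolynomial (Fin 2) O)
    (hhom : ∀ D, (φ D).IsHomogeneous g)
    (lam : O)
    (heig : ∀ D, degDiv D = 0 →
      (∑ a ∈ Finset.range p, matAct !![1, (a : ℤ); 0, (p : ℤ)]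
          (φ (Finsupp.mapDomain (moeb !![1, (a : ℤ); 0, (p : ℤ)]) D)))
        + matAct !![(p : ℤ), 0; 0, 1]
            (φ (Finsupp.mapDomain (moeb !![(p : ℤ), 0; 0, 1]) D))
      = lam • φ D)
    (hfil : ∀ D, degDiv D = 0 → inFil O p g r (φ D))
    (u : O) (hu : ∃ w : Oˣ, u = (w : O) * (N : O) ^ (g / 2))
    (hFE : ∀ D, degDiv D = 0 →
      matAct !![0, -1; (N : ℤ), 0] (φ (Finsupp.mapDomain (moeb !![0, -1; (N : ℤ), 0]) D))
        = u • φ D)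
    (hnorm : ∃ D, degDiv D = 0 ∧ ∃ m : (Fin 2) →₀ ℕ, v (MvPolynomial.coeff m (φ D)) = 0) :
    (r : WithTop ℚ) ≤ v lam := by
  obtain ⟨D, hD, m, hm⟩ := hnorm
  obtain ⟨w, rfl⟩ := hu
  have hdeg : ∀ f D, degDiv D = 0 → degDiv (Finsupp.mapDomain f D) = 0 :=
    fun f D h => (degDiv_mapDomain f D).trans h
  set D' := Finsupp.mapDomain (moeb !![(p : ℤ), 0; 0, 1]) D
  set E := Finsupp.mapDomain (moeb !![0, -1; (N : ℤ), 0]) D'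
  have hAL : (w * (N : O) ^ (g / 2)) • matAct !![(p : ℤ), 0; 0, 1] (φ D')
      = matAct !![0, -1; (N : ℤ), 0] (matAct !![1, 0; 0, (p : ℤ)] (φ E)) := by
    rw [← matAct_smul, ← hFE D' (hdeg _ _ hD), matAct_mul, matAct_mul]
    -- `W · diag(p,1) = diag(1,p) · W` for the Atkin–Lehner matrix `W`
    congr 1
    ext i j
    fin_cases i <;> fin_cases j <;> simp [mul_comm]
  have hcop : IsCoprime ((p : O) ^ r) (w * (N : O) ^ (g / 2)) :=
    (isCoprime_mul_unit_left_right w.isUnit _ _).2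
      ((Nat.Coprime.cast ((hp.coprime_iff_not_dvd).2 hpN)).pow)
  have hdvd : C ((p : O) ^ r) ∣ lam • φ D := by
    rw [← heig D hD]
    refine dvd_add (Finset.dvd_sum fun a _ => ?_) (C_dvd_of_C_dvd_smul hcop ?_)
    · exact C_pow_dvd_matAct_of_inFil (hhom _) (hfil _ (hdeg _ _ hD)) (by simp) (by simp)
    · exact hAL ▸ C_dvd_matAct _ (C_pow_dvd_matAct_of_inFil (hhom E)
        (hfil E (hdeg _ _ (hdeg _ _ hD))) (by simp) (by simp))
  have hcoeff := le_addValuation_of_pow_dvd v hvp hnn ((C_dvd_iff_dvd_coeff _ _).1 hdvd m)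
  rwa [coeff_smul, smul_eq_mul, v.map_mul, hm, add_zero] at hcoeff

/-- Let `φ` be a `Γ_0(N)`-invariant `V_g(O)`-valued modular symbol (`p ∤ N`) which is a
`T_p`-eigensymbol with eigenvalue `lam`, takes all its values in `Fil^r(V_g(O))`,
satisfies the functional equation `φ|[[0,-1],[N,0]] = u·φ` with `u ∈ O^× · N^{g/2}`,
and has `‖φ‖ = 1` (all values integral, some coefficient a unit).  Then
`ord_p(lam) ≥ r`. -/
theorem slope_ge_of_fil (p N g r : ℕ) (hp : p.Prime) (hodd : Odd p) (hpN : ¬ p ∣ N)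
    (hgeven : Even g)
    (O : Type*) [CommRing O] [IsDomain O]
    (v : AddValuation O (WithTop ℚ)) (hvp : v (p : O) = 1) (hnn : ∀ x : O, 0 ≤ v x)
    (hvtop : ∀ x : O, v x = ⊤ ↔ x = 0)
    (φ : (Option ℚ →₀ ℤ) → MvPolynomial (Fin 2) O)
    (hhom : ∀ D, (φ D).IsHomogeneous g)
    (hadd : ∀ D D', degDiv D = 0 → degDiv D' = 0 → φ (D + D') = φ D + φ D')
    (hinv : ∀ γ : Matrix (Fin 2) (Fin 2) ℤ, γ.det = 1 → (N : ℤ) ∣ γ 1 0 →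
      ∀ D, degDiv D = 0 → matAct γ (φ (Finsupp.mapDomain (moeb γ) D)) = φ D)
    (lam : O)
    (heig : ∀ D, degDiv D = 0 →
      (∑ a ∈ Finset.range p, matAct !![1, (a : ℤ); 0, (p : ℤ)]
          (φ (Finsupp.mapDomain (moeb !![1, (a : ℤ); 0, (p : ℤ)]) D)))
        + matAct !![(p : ℤ), 0; 0, 1]
            (φ (Finsupp.mapDomain (moeb !![(p : ℤ), 0; 0, 1]) D))
      = lam • φ D)
    (hfil : ∀ D, degDiv D = 0 → inFil O p g r (φ D))
    (u : O) (hu : ∃ w : Oˣ, u = (w : O) * (N : O) ^ (g / 2))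
    (hFE : ∀ D, degDiv D = 0 →
      matAct !![0, -1; (N : ℤ), 0] (φ (Finsupp.mapDomain (moeb !![0, -1; (N : ℤ), 0]) D))
        = u • φ D)
    (hnorm : ∃ D, degDiv D = 0 ∧ ∃ m : (Fin 2) →₀ ℕ, v (MvPolynomial.coeff m (φ D)) = 0) :
    (r : WithTop ℚ) ≤ v lam :=
  slope_ge_of_fil_general p N g r hp hpN O v hvp hnn φ hhom lam heig hfil u hu hFE hnorm
end

section
/- For an odd prime p and k with 2 < k < p^2+1 and k ≡ 2 mod (p-1), define sets L_θ(m) ⊆ Z/(p^2-1)Z recursively by: L_θ(m) = ∅ for m ≤ p+1; L_θ(m) ⊆ { t + p + 1 : t ∈ L(m-p-1) } for m > p+1; and L(m) ⊆ L_θ(m) ∪ { m' + 1 } where m' is the remainder of m-2 divided by p-1. Then for the maximal such sets (defined by equality in the recursions), L_θ(k) = { j(p-1) + 1 : 2 ≤ j ≤ (k-2)/(p-1), j ≠ (p+3)/2 } (as a subset of Z/(p^2-1)Z modulo the identification t ∼ pt), and in particular neither 1 nor p lies in L_θ(k). -/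
/-- The sets `L_θ(m) ⊆ ℤ/(p^2-1)ℤ` defined by the recursion (with equality):
`L_θ(m) = ∅` for `m ≤ p+1`; `L_θ(m) = { t + p + 1 : t ∈ L(m-p-1) }` for `m > p+1`,
where `L(m) = L_θ(m) ∪ { m' + 1 }` and `m'` is the remainder of `m - 2` divided
by `p - 1`. -/
def Lth (p : ℕ) (m : ℕ) : Set (ZMod (p ^ 2 - 1)) :=
  if h : m ≤ p + 1 then ∅
  else (· + ((p : ZMod (p ^ 2 - 1)) + 1)) ''
    (Lth p (m - (p + 1)) ∪ {(((m - (p + 1) - 2) % (p - 1) + 1 : ℕ) : ZMod (p ^ 2 - 1))})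
  termination_by m
  decreasing_by omega

/-- The sets `L(m) = L_θ(m) ∪ {m' + 1}`. -/
def LSet (p : ℕ) (m : ℕ) : Set (ZMod (p ^ 2 - 1)) :=
  Lth p m ∪ {(((m - 2) % (p - 1) + 1 : ℕ) : ZMod (p ^ 2 - 1))}

def Eel (p m i : ℕ) : ℕ := (m - i * (p + 1) - 2) % (p - 1) + 1 + i * (p + 1)

lemma Lth_closed (p m : ℕ) :
    Lth p m = (fun i : ℕ => ((Eel p m i : ℕ) : ZMod (p ^ 2 - 1))) ''
      {i : ℕ | 1 ≤ i ∧ i * (p + 1) < m} := by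
  induction m using Nat.strong_induction_on with
  | _ m ih =>
  rw [Lth]
  split_ifs with h
  · ext x
    simp only [Set.mem_empty_iff_false, Set.mem_image, Set.mem_setOf_eq, false_iff, not_exists]
    rintro i ⟨⟨hi1, hi2⟩, -⟩
    have := Nat.le_mul_of_pos_left (p + 1) hi1
    omega
  · rw [ih (m - (p + 1)) (by omega)]
    ext x
    simp only [Set.mem_image, Set.mem_union, Set.mem_singleton_iff, Set.mem_setOf_eq]
    constructor
    · rintro ⟨t, ht, rfl⟩
      rcases ht with ⟨i, ⟨hi1, hi2⟩, rfl⟩ | rfl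
      · have h2 : (i + 1) * (p + 1) = i * (p + 1) + (p + 1) := by ring
        refine ⟨i + 1, ⟨by omega, by omega⟩, ?_⟩
        have key : Eel p (m - (p + 1)) i + (p + 1) = Eel p m (i + 1) := by
          unfold Eel
          have h1 : m - (p + 1) - i * (p + 1) - 2 = m - (i + 1) * (p + 1) - 2 := by omega
          rw [h1]; ring
        rw [← key]; push_cast; ring
      · refine ⟨1, ⟨le_refl 1, by omega⟩, ?_⟩
        have key : (m - (p + 1) - 2) % (p - 1) + 1 + (p + 1) = Eel p m 1 := by
          unfold Eel; rw [one_mul]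
        rw [← key]; push_cast; ring
    · rintro ⟨i, ⟨hi1, hi2⟩, rfl⟩
      rcases Nat.lt_or_ge i 2 with hi | hi
      · have hi' : i = 1 := by omega
        subst hi'
        refine ⟨_, Or.inr rfl, ?_⟩
        have key : (m - (p + 1) - 2) % (p - 1) + 1 + (p + 1) = Eel p m 1 := by
          unfold Eel; rw [one_mul]
        rw [← key]; push_cast; ring
      · obtain ⟨i', rfl⟩ : ∃ i', i = i' + 1 := ⟨i - 1, by omega⟩
        have h2 : (i' + 1) * (p + 1) = i' * (p + 1) + (p + 1) := by ring
        refine ⟨_, Or.inl ⟨i', ⟨by omega, by omega⟩, rfl⟩, ?_⟩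
        have key : Eel p (m - (p + 1)) i' + (p + 1) = Eel p m (i' + 1) := by
          unfold Eel
          have h1 : m - (p + 1) - i' * (p + 1) - 2 = m - (i' + 1) * (p + 1) - 2 := by omega
          rw [h1]; ring
        rw [← key]; push_cast; ring

lemma Eel_compute (q k n i : ℕ) (hq : 2 ≤ q) (hq2 : q % 2 = 0) (hk : k = n * q + 2)
    (hn : n ≤ q + 1) (hi : 1 ≤ i) (hik : i * (q + 2) < k) :
    (2 * i ≤ q → Eel (q + 1) k i = (i + 1) * q + 1 ∧ i + 1 ≤ n) ∧
    (q < 2 * i → Eel (q + 1) k i = (i + 2) * q + 1 ∧ i + 2 ≤ n) := by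
  have hE0 : Eel (q + 1) k i = (k - i * (q + 2) - 2) % q + 1 + i * (q + 2) := rfl
  have e1 : i * (q + 2) = i * q + 2 * i := by ring
  have hle : i * q + 2 * i ≤ n * q := by
    have h1 : i * q % 2 = 0 := by
      have := Nat.mul_mod i q 2; rw [hq2] at this; omega
    have h2 : n * q % 2 = 0 := by
      have := Nat.mul_mod n q 2; rw [hq2] at this; omega
    omega
  have hin : i < n := by
    by_contra hc
    have : n * q ≤ i * q := mul_le_mul_left (by omega) q
    omega
  constructor
  · intro h2i
    have e2 : n * q = (n - i - 1) * q + i * q + q := by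
      have h4 : n = (n - i - 1) + i + 1 := by omega
      calc n * q = ((n - i - 1) + i + 1) * q := by rw [← h4]
        _ = (n - i - 1) * q + i * q + q := by ring
    have hmod : k - i * (q + 2) - 2 = (q - 2 * i) + (n - i - 1) * q := by omega
    refine ⟨?_, by omega⟩
    rw [hE0, hmod, Nat.add_mul_mod_self_right, Nat.mod_eq_of_lt (by omega)]
    have e3 : (i + 1) * q = i * q + q := by ring
    omega
  · intro h2i
    have hin2 : i + 1 < n := by
      by_contra hc
      have : n * q ≤ (i + 1) * q := mul_le_mul_left (by omega) q
      have e3 : (i + 1) * q = i * q + q := by ring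
      omega
    have hiq : i < q := by omega
    have e2 : n * q = (n - i - 2) * q + i * q + 2 * q := by
      have h4 : n = (n - i - 2) + i + 2 := by omega
      calc n * q = ((n - i - 2) + i + 2) * q := by rw [← h4]
        _ = (n - i - 2) * q + i * q + 2 * q := by ring
    have hmod : k - i * (q + 2) - 2 = (2 * q - 2 * i) + (n - i - 2) * q := by omega
    refine ⟨?_, by omega⟩
    rw [hE0, hmod, Nat.add_mul_mod_self_right, Nat.mod_eq_of_lt (by omega)]
    have e3 : (i + 2) * q = i * q + 2 * q := by ring
    omega

/-- For an odd prime `p` and `2 < k < p^2 + 1` with `k ≡ 2 mod (p-1)`,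
the maximal sets satisfying the recursion give
`L_θ(k) = { j(p-1) + 1 : 2 ≤ j ≤ (k-2)/(p-1), j ≠ (p+3)/2 }` as a subset of
`ℤ/(p^2-1)ℤ` modulo the identification `t ∼ pt`; in particular neither `1`
nor `p` lies in `L_θ(k)`. -/
theorem Lth_description (p k : ℕ) (hp : p.Prime) (hodd : Odd p)
    (hk1 : 2 < k) (hk2 : k < p ^ 2 + 1) (hk3 : k % (p - 1) = 2 % (p - 1)) :
    (∀ x : ZMod (p ^ 2 - 1),
        (x ∈ Lth p k ∨ (p : ZMod (p ^ 2 - 1)) * x ∈ Lth p k) ↔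
          (∃ j : ℕ, 2 ≤ j ∧ j ≤ (k - 2) / (p - 1) ∧ j ≠ (p + 3) / 2 ∧
            (x = ((j * (p - 1) + 1 : ℕ) : ZMod (p ^ 2 - 1)) ∨
              (p : ZMod (p ^ 2 - 1)) * x = ((j * (p - 1) + 1 : ℕ) : ZMod (p ^ 2 - 1))))) ∧
      (1 : ZMod (p ^ 2 - 1)) ∉ Lth p k ∧ (p : ZMod (p ^ 2 - 1)) ∉ Lth p k := by
  have hodd2 : p % 2 = 1 := Nat.odd_iff.mp hodd
  have hp3 : 3 ≤ p := by have := hp.two_le; omega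
  obtain ⟨q, rfl⟩ : ∃ q, p = q + 1 := ⟨p - 1, by omega⟩
  have hq : 2 ≤ q := by omega
  have hq2 : q % 2 = 0 := by omega
  have e4 : (q + 1) ^ 2 = q ^ 2 + 2 * q + 1 := by ring
  have e5 : q ^ 2 = q * q := sq q
  have hqq : 2 * q ≤ q * q := mul_le_mul_left hq q
  have hN : 8 ≤ (q + 1) ^ 2 - 1 := by omega
  haveI : NeZero ((q + 1) ^ 2 - 1) := ⟨by omega⟩
  haveI : Fact (1 < (q + 1) ^ 2 - 1) := ⟨by omega⟩
  -- normalize the subtraction p - 1 = q and (p+3)/2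
  have hsub : q + 1 - 1 = q := rfl
  have hhalf : (q + 1 + 3) / 2 = q / 2 + 2 := by omega
  rw [hsub] at hk3
  -- divisibility and n
  have hdvd : q ∣ (k - 2) := (Nat.modEq_iff_dvd' (by omega)).mp hk3.symm
  have hkn : k = (k - 2) / q * q + 2 := by
    have h0 := Nat.div_mul_cancel hdvd
    omega
  set n := (k - 2) / q with hndef
  have hn1 : 1 ≤ n := by
    rcases Nat.eq_zero_or_pos n with h | h
    · rw [h] at hkn; omega
    · exact h
  have hnp : n ≤ q + 1 := by
    by_contra hcon
    have : (q + 2) * q ≤ n * q := mul_le_mul_left (by omega) q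
    have e6 : (q + 2) * q = q * q + 2 * q := by ring
    omega
  -- membership characterization
  have hmem : ∀ y : ZMod ((q + 1) ^ 2 - 1), y ∈ Lth (q + 1) k ↔
      ∃ i, (1 ≤ i ∧ i * (q + 2) < k) ∧
        ((Eel (q + 1) k i : ℕ) : ZMod ((q + 1) ^ 2 - 1)) = y := by
    intro y
    rw [Lth_closed]
    constructor
    · rintro ⟨i, hi, rfl⟩; exact ⟨i, hi, rfl⟩
    · rintro ⟨i, hi, rfl⟩; exact ⟨i, hi, rfl⟩
  have lemA : ∀ i, 1 ≤ i → i * (q + 2) < k →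
      ∃ j, 2 ≤ j ∧ j ≤ n ∧ j ≠ q / 2 + 2 ∧ Eel (q + 1) k i = j * q + 1 := by
    intro i hi hik
    have hc := Eel_compute q k n i hq hq2 hkn hnp hi hik
    rcases le_or_gt (2 * i) q with h | h
    · obtain ⟨he, hle⟩ := hc.1 h
      exact ⟨i + 1, by omega, by omega, by omega, he⟩
    · obtain ⟨he, hle⟩ := hc.2 h
      exact ⟨i + 2, by omega, by omega, by omega, he⟩
  have lemB : ∀ j, 2 ≤ j → j ≤ n → j ≠ q / 2 + 2 →
      ∃ i, (1 ≤ i ∧ i * (q + 2) < k) ∧ Eel (q + 1) k i = j * q + 1 := by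
    intro j h2 hjn hne
    rcases le_or_gt j (q / 2 + 1) with h | h
    · have hik : (j - 1) * (q + 2) < k := by
        have e1 : (j - 1) * (q + 2) = (j - 1) * q + 2 * (j - 1) := by ring
        have e2 : (j - 1) * q ≤ (n - 1) * q := mul_le_mul_left (by omega) q
        have e3 : (n - 1) * q + q = n * q := by
          have h4 : (n - 1) + 1 = n := by omega
          calc (n - 1) * q + q = ((n - 1) + 1) * q := by ring
            _ = n * q := by rw [h4]
        omega
      obtain ⟨hE, -⟩ := (Eel_compute q k n (j - 1) hq hq2 hkn hnp (by omega) hik).1 (by omega)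
      rw [show j - 1 + 1 = j from by omega] at hE
      exact ⟨j - 1, ⟨by omega, hik⟩, hE⟩
    · have h3 : q / 2 + 3 ≤ j := by omega
      have hik : (j - 2) * (q + 2) < k := by
        have e1 : (j - 2) * (q + 2) = (j - 2) * q + 2 * (j - 2) := by ring
        have e2 : (j - 2) * q ≤ (n - 2) * q := mul_le_mul_left (by omega) q
        have e3 : (n - 2) * q + 2 * q = n * q := by
          have h4 : (n - 2) + 2 = n := by omega
          calc (n - 2) * q + 2 * q = ((n - 2) + 2) * q := by ring
            _ = n * q := by rw [h4]
        omega
      obtain ⟨hE, -⟩ := (Eel_compute q k n (j - 2) hq hq2 hkn hnp (by omega) hik).2 (by omega)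
      rw [show j - 2 + 2 = j from by omega] at hE
      exact ⟨j - 2, ⟨by omega, hik⟩, hE⟩
  have hbound : ∀ j, j ≤ n → j * q + 1 < (q + 1) ^ 2 - 1 := by
    intro j hj
    have e2 : j * q ≤ (q + 1) * q := mul_le_mul_left (by omega) q
    have e3 : (q + 1) * q = q * q + q := by ring
    omega
  refine ⟨?_, ?_, ?_⟩
  · intro x
    simp only [hsub, hhalf]
    constructor
    · rintro (hx | hx)
      · obtain ⟨i, ⟨hi1, hi2⟩, hEq⟩ := (hmem x).mp hx
        obtain ⟨j, hj2, hjn, hjne, hEj⟩ := lemA i hi1 hi2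
        exact ⟨j, hj2, hjn, hjne, Or.inl (by rw [← hEq, hEj])⟩
      · obtain ⟨i, ⟨hi1, hi2⟩, hEq⟩ := (hmem _).mp hx
        obtain ⟨j, hj2, hjn, hjne, hEj⟩ := lemA i hi1 hi2
        exact ⟨j, hj2, hjn, hjne, Or.inr (by rw [← hEq, hEj])⟩
    · rintro ⟨j, hj2, hjn, hjne, hx | hx⟩
      · left
        apply (hmem x).mpr
        obtain ⟨i, hi, hE⟩ := lemB j hj2 hjn hjne
        exact ⟨i, hi, by rw [hE, ← hx]⟩
      · right
        apply (hmem _).mpr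
        obtain ⟨i, hi, hE⟩ := lemB j hj2 hjn hjne
        exact ⟨i, hi, by rw [hE, ← hx]⟩
  · intro hx
    obtain ⟨i, ⟨hi1, hi2⟩, hEq⟩ := (hmem 1).mp hx
    obtain ⟨j, hj2, hjn, hjne, hEj⟩ := lemA i hi1 hi2
    rw [hEj] at hEq
    have hv := congrArg ZMod.val hEq
    rw [ZMod.val_cast_of_lt (hbound j hjn), ZMod.val_one] at hv
    have h2q : 2 * 2 ≤ j * q := Nat.mul_le_mul hj2 hq
    omega
  · intro hx
    obtain ⟨i, ⟨hi1, hi2⟩, hEq⟩ := (hmem _).mp hx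
    obtain ⟨j, hj2, hjn, hjne, hEj⟩ := lemA i hi1 hi2
    rw [hEj] at hEq
    have hv := congrArg ZMod.val hEq
    rw [ZMod.val_cast_of_lt (hbound j hjn), ZMod.val_natCast_of_lt (by omega)] at hv
    have h2q : 2 * q ≤ j * q := mul_le_mul_left hj2 q
    omega
end
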